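/- arXiv:2004.02180 — 6 statements merged into one kernel-verified Lean document; each statement's English description precedes it below -/
import Mathlib

section
/- Let n ≤ m and let {A,B} be an (m,p,n)-GMP with GSVD as in the context, with generalized singular values (αᵢ, βᵢ). Then for every 1 ≤ i ≤ n, αᵢ² equals the difference of maxima: αᵢ² = max_{Φ ∈ 𝕌_m} Re tr(Aᴴ Φᴴ Q_i Φ A (AᴴA + BᴴB)^{-1}) − max_{Φ ∈ 𝕌_m} Re tr(Aᴴ Φᴴ Q_{i-1} Φ A (AᴴA + BᴴB)^{-1}). -/
/-!
By the GSVD, `AᴴA + BᴴB = RᴴR`, hence `A (AᴴA + BᴴB)⁻¹ Aᴴ = U D Uᴴ` with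
`D = diag(α₁², …, αₙ², 0, …, 0)`, and cyclicity of the trace turns the `k`-th maximum into the
maximum of `Re tr(Q_k Ψ D Ψᴴ)` over unitary `Ψ`. Since `(|Ψ r j|²)` is doubly stochastic, this
is `∑ⱼ dⱼ cⱼ` with weights `cⱼ ∈ [0, 1]` of total mass `k`, which is at most the sum of the `k`
largest `dⱼ`, with equality at `Ψ = 1`. Consecutive maxima therefore differ by `αᵢ²`.
-/

open Matrix Finset

section Rearrangement

variable {m : ℕ}

lemma sum_filter_lt_succ_sub_sum_filter_lt (d : Fin m → ℝ) {k : ℕ} (hk : k < m) :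
    ∑ j : Fin m with Fin.val j < k + 1, d j - ∑ j : Fin m with Fin.val j < k, d j = d ⟨k, hk⟩ := by
  have : univ.filter (fun j : Fin m => (j : ℕ) < k + 1)
      = insert ⟨k, hk⟩ (univ.filter fun j : Fin m => (j : ℕ) < k) := by
    ext j; simp only [mem_filter, mem_univ, true_and, mem_insert, Fin.ext_iff]; omega
  rw [this, sum_insert (by simp), add_sub_cancel_right]

lemma sum_mul_le_sum_filter_lt {d c : Fin m → ℝ} (hd : Antitone d) (hc0 : ∀ j, 0 ≤ c j)
    (hc1 : ∀ j, c j ≤ 1) {k : ℕ} (hk : k ≤ m) (hsum : ∑ j, c j = k) :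
    ∑ j, d j * c j ≤ ∑ j : Fin m with Fin.val j < k, d j := by
  obtain ⟨t, ht_lt, ht_ge⟩ : ∃ t, (∀ j : Fin m, (j : ℕ) < k → t ≤ d j) ∧
      ∀ j : Fin m, k ≤ (j : ℕ) → d j ≤ t := by
    by_cases hkm : k < m
    · exact ⟨d ⟨k, hkm⟩, fun j hj => hd (Fin.mk_le_of_le_val hj.le),
        fun j hj => hd (Fin.le_def.2 hj)⟩
    · obtain ⟨t, ht⟩ := Finite.bddBelow_range d
      exact ⟨t, fun j _ => ht ⟨j, rfl⟩, fun j hj => absurd j.isLt (by omega)⟩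
  -- Termwise comparison with a threshold `t` separating the first `k` values from the rest.
  have hterm : ∀ j : Fin m, d j * c j - (if (j : ℕ) < k then d j else 0)
      ≤ t * (c j - if (j : ℕ) < k then 1 else 0) := by
    intro j
    by_cases hj : (j : ℕ) < k
    · simp only [hj, if_true]; nlinarith [ht_lt j hj, hc1 j]
    · simp only [hj, if_false]; nlinarith [ht_ge j (not_lt.1 hj), hc0 j]
  have hcard : ∑ j : Fin m, (if (j : ℕ) < k then (1 : ℝ) else 0) = k := by
    rw [sum_boole, Fin.card_filter_val_lt, min_eq_right hk]
  have := sum_le_sum fun j (_ : j ∈ univ) => hterm j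
  rw [sum_sub_distrib, ← mul_sum, sum_sub_distrib, hsum, hcard, sub_self, mul_zero,
    ← sum_filter] at this
  linarith

end Rearrangement

section Unitary

variable {ι : Type*} [Fintype ι] [DecidableEq ι]

lemma sum_normSq_apply_col_of_mem_unitaryGroup {Ψ : Matrix ι ι ℂ}
    (hΨ : Ψ ∈ unitaryGroup ι ℂ) (j : ι) : ∑ r, Complex.normSq (Ψ r j) = 1 := by
  have h := congr_fun₂ (mem_unitaryGroup_iff'.mp hΨ) j j
  rw [star_eq_conjTranspose, mul_apply, one_apply_eq] at h
  have h' := congrArg Complex.re h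
  simp only [conjTranspose_apply, Complex.re_sum, Complex.one_re] at h'
  simpa [RCLike.star_def, Complex.normSq_apply, mul_comm] using h'

lemma sum_normSq_apply_row_of_mem_unitaryGroup {Ψ : Matrix ι ι ℂ}
    (hΨ : Ψ ∈ unitaryGroup ι ℂ) (r : ι) : ∑ j, Complex.normSq (Ψ r j) = 1 := by
  simpa using sum_normSq_apply_col_of_mem_unitaryGroup (Unitary.star_mem hΨ) r

lemma re_trace_diagonal_mul_mul_diagonal_mul_conjTranspose (q d : ι → ℝ) (Ψ : Matrix ι ι ℂ) :
    (trace (diagonal (fun r => (q r : ℂ)) * Ψ * diagonal (fun j => (d j : ℂ)) * Ψᴴ)).re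
      = ∑ r, ∑ j, q r * d j * Complex.normSq (Ψ r j) := by
  simp only [trace, diag_apply, Complex.re_sum]
  refine sum_congr rfl fun r _ => ?_
  rw [mul_apply, Complex.re_sum]
  refine sum_congr rfl fun j _ => ?_
  rw [mul_diagonal, diagonal_mul, conjTranspose_apply, RCLike.star_def, ← Complex.ofReal_re
    (q r * d j * _), Complex.ofReal_mul, ← Complex.mul_conj]
  push_cast
  congr 1
  ring

end Unitary

section KyFan

variable {m : ℕ}

/-- The paper's `Q_k`. -/
def prefixProj (m k : ℕ) : Matrix (Fin m) (Fin m) ℂ :=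
  diagonal fun r => if (r : ℕ) < k then 1 else 0

lemma prefixProj_eq_diagonal_ofReal (k : ℕ) :
    prefixProj m k = diagonal fun r : Fin m => ((if (r : ℕ) < k then 1 else 0 : ℝ) : ℂ) := by
  simp only [prefixProj, apply_ite Complex.ofReal, Complex.ofReal_one, Complex.ofReal_zero]

lemma re_trace_prefixProj_mul_conj_le {Ψ : Matrix (Fin m) (Fin m) ℂ}
    (hΨ : Ψ ∈ unitaryGroup (Fin m) ℂ) {d : Fin m → ℝ} (hd : Antitone d) {k : ℕ} (hk : k ≤ m) :
    (trace (prefixProj m k * Ψ * diagonal (fun j => (d j : ℂ)) * Ψᴴ)).re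
      ≤ ∑ j : Fin m with Fin.val j < k, d j := by
  set c : Fin m → ℝ := fun j => ∑ r : Fin m with Fin.val r < k, Complex.normSq (Ψ r j)
  have htrace : (trace (prefixProj m k * Ψ * diagonal (fun j => (d j : ℂ)) * Ψᴴ)).re
      = ∑ j, d j * c j := by
    rw [prefixProj_eq_diagonal_ofReal, re_trace_diagonal_mul_mul_diagonal_mul_conjTranspose,
      sum_comm]
    simp only [c, mul_sum, sum_filter]
    refine sum_congr rfl fun j _ => sum_congr rfl fun r _ => ?_
    split_ifs <;> ring
  have hc0 : ∀ j, 0 ≤ c j := fun j => sum_nonneg fun r _ => Complex.normSq_nonneg _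
  have hc1 : ∀ j, c j ≤ 1 := fun j =>
    (sum_le_univ_sum_of_nonneg fun r => Complex.normSq_nonneg _).trans
      (sum_normSq_apply_col_of_mem_unitaryGroup hΨ j).le
  have hsum : ∑ j, c j = k := by
    simp only [c]
    rw [sum_comm, sum_congr rfl fun r _ => sum_normSq_apply_row_of_mem_unitaryGroup hΨ r,
      sum_const, Fin.card_filter_val_lt, min_eq_right hk, nsmul_one]
  exact htrace ▸ sum_mul_le_sum_filter_lt hd hc0 hc1 hk hsum

lemma re_trace_prefixProj_mul_diagonal (d : Fin m → ℝ) (k : ℕ) :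
    (trace (prefixProj m k * diagonal (fun j => (d j : ℂ)))).re
      = ∑ j : Fin m with Fin.val j < k, d j := by
  simp [prefixProj, trace, sum_filter, apply_ite]

lemma iSup_re_trace_prefixProj_mul_conj {d : Fin m → ℝ} (hd : Antitone d) {k : ℕ} (hk : k ≤ m) :
    ⨆ Ψ : unitaryGroup (Fin m) ℂ,
        (trace (prefixProj m k * (Ψ : Matrix (Fin m) (Fin m) ℂ) * diagonal (fun j => (d j : ℂ)) *
          (Ψ : Matrix (Fin m) (Fin m) ℂ)ᴴ)).re
      = ∑ j : Fin m with Fin.val j < k, d j := by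
  have hle : ∀ Ψ : unitaryGroup (Fin m) ℂ,
      (trace (prefixProj m k * (Ψ : Matrix (Fin m) (Fin m) ℂ) * diagonal (fun j => (d j : ℂ)) *
          (Ψ : Matrix (Fin m) (Fin m) ℂ)ᴴ)).re
        ≤ ∑ j : Fin m with Fin.val j < k, d j :=
    fun Ψ => re_trace_prefixProj_mul_conj_le Ψ.2 hd hk
  refine le_antisymm (ciSup_le hle) (le_ciSup_of_le ⟨_, Set.forall_mem_range.2 hle⟩ 1 ?_)
  simp [re_trace_prefixProj_mul_diagonal]

lemma iSup_re_trace_prefixProj_mul_unitary_conj {U : Matrix (Fin m) (Fin m) ℂ}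
    (hU : U ∈ unitaryGroup (Fin m) ℂ) {d : Fin m → ℝ} (hd : Antitone d) {k : ℕ} (hk : k ≤ m) :
    ⨆ Φ : unitaryGroup (Fin m) ℂ,
        (trace (prefixProj m k * (Φ : Matrix (Fin m) (Fin m) ℂ) *
          (U * diagonal (fun j => (d j : ℂ)) * Uᴴ) * (Φ : Matrix (Fin m) (Fin m) ℂ)ᴴ)).re
      = ∑ j : Fin m with Fin.val j < k, d j := by
  rw [← iSup_re_trace_prefixProj_mul_conj hd hk]
  refine .trans ?_ ((Equiv.mulRight (⟨U, hU⟩ : unitaryGroup (Fin m) ℂ)).surjective.iSup_comp _)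
  refine iSup_congr fun Φ => ?_
  simp only [Equiv.coe_mulRight, Submonoid.coe_mul, conjTranspose_mul, Matrix.mul_assoc]

end KyFan

section GSVD

variable {m n p : ℕ}

def zeroExtend (m : ℕ) (f : Fin n → ℝ) (j : Fin m) : ℝ :=
  if h : (j : ℕ) < n then f ⟨j, h⟩ else 0

lemma Antitone.zeroExtend {f : Fin n → ℝ} (hf : Antitone f) (hf0 : ∀ l, 0 ≤ f l) :
    Antitone (zeroExtend m f) := by
  intro a b hab
  unfold _root_.zeroExtend
  by_cases hb : (b : ℕ) < n
  · rw [dif_pos hb, dif_pos (lt_of_le_of_lt (Fin.le_def.1 hab) hb)]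
    exact hf (Fin.mk_le_mk.2 hab)
  · rw [dif_neg hb]
    split_ifs
    exacts [hf0 _, le_rfl]

/-- The factor `Σ_A` of the GSVD. -/
def rectDiagonal (m : ℕ) (α : Fin n → ℝ) : Matrix (Fin m) (Fin n) ℂ :=
  Matrix.of fun k l => if (k : ℕ) = (l : ℕ) then (α l : ℂ) else 0

lemma rectDiagonal_mul_conjTranspose (α : Fin n → ℝ) :
    rectDiagonal m α * (rectDiagonal m α)ᴴ
      = diagonal fun j => (zeroExtend m (fun l => α l ^ 2) j : ℂ) := by
  ext k k'
  simp only [rectDiagonal, zeroExtend, mul_apply, conjTranspose_apply, Matrix.of_apply,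
    diagonal_apply]
  by_cases hk : (k : ℕ) < n
  · rw [sum_eq_single ⟨k, hk⟩ (fun l _ hl => by simp [Fin.ext_iff] at hl; simp [Ne.symm hl])
      (by simp)]
    by_cases hkk : k = k'
    · subst hkk; simp [hk, sq]
    · simp [hkk, Fin.val_ne_of_ne (Ne.symm hkk)]
  · rw [sum_eq_zero fun l _ => by simp [show (k : ℕ) ≠ l by omega]]
    simp [hk]

lemma conjTranspose_rectDiagonal_mul (hnm : n ≤ m) (α : Fin n → ℝ) :
    (rectDiagonal m α)ᴴ * rectDiagonal m α = diagonal fun l => ((α l ^ 2 : ℝ) : ℂ) := by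
  ext l l'
  simp only [rectDiagonal, mul_apply, conjTranspose_apply, Matrix.of_apply, diagonal_apply]
  rw [sum_eq_single (Fin.castLE hnm l)
    (fun k _ hk => by simp [Fin.ext_iff] at hk; simp [hk]) (by simp)]
  by_cases hll : l = l'
  · subst hll; simp [sq]
  · simp [hll, Fin.val_ne_of_ne hll]

variable {A : Matrix (Fin m) (Fin n) ℂ} {B : Matrix (Fin p) (Fin n) ℂ}
  {U : Matrix (Fin m) (Fin m) ℂ} {R : Matrix (Fin n) (Fin n) ℂ} {α : Fin n → ℝ}

lemma gram_eq_of_gsvd (hnm : n ≤ m) (hU : U ∈ unitaryGroup (Fin m) ℂ)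
    (hA : A = U * rectDiagonal m α * R)
    (hBB : Bᴴ * B = Rᴴ * diagonal (fun l => ((1 - α l ^ 2 : ℝ) : ℂ)) * R) :
    Aᴴ * A + Bᴴ * B = Rᴴ * R := by
  have hAA : Aᴴ * A = Rᴴ * diagonal (fun l => ((α l ^ 2 : ℝ) : ℂ)) * R := by
    have hUU : Uᴴ * U = 1 := mem_unitaryGroup_iff'.mp hU
    rw [hA]
    simp only [conjTranspose_mul, Matrix.mul_assoc]
    rw [← Matrix.mul_assoc Uᴴ, hUU, Matrix.one_mul, ← Matrix.mul_assoc (rectDiagonal m α)ᴴ,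
      conjTranspose_rectDiagonal_mul hnm]
  rw [hAA, hBB, ← add_mul, ← mul_add, diagonal_add]
  simp

lemma mul_inv_gram_mul_conjTranspose_of_gsvd (hnm : n ≤ m) (hU : U ∈ unitaryGroup (Fin m) ℂ)
    (hR : IsUnit R.det) (hA : A = U * rectDiagonal m α * R)
    (hBB : Bᴴ * B = Rᴴ * diagonal (fun l => ((1 - α l ^ 2 : ℝ) : ℂ)) * R) :
    A * (Aᴴ * A + Bᴴ * B)⁻¹ * Aᴴ
      = U * diagonal (fun j => (zeroExtend m (fun l => α l ^ 2) j : ℂ)) * Uᴴ := by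
  have hRR : R * R⁻¹ = 1 := mul_nonsing_inv R hR
  have hRR' : (Rᴴ)⁻¹ * Rᴴ = 1 := nonsing_inv_mul Rᴴ (by rw [det_conjTranspose]; exact hR.star)
  rw [gram_eq_of_gsvd hnm hU hA hBB, Matrix.mul_inv_rev, hA]
  simp only [conjTranspose_mul, Matrix.mul_assoc]
  rw [← Matrix.mul_assoc R, hRR, Matrix.one_mul, ← Matrix.mul_assoc (Rᴴ)⁻¹, hRR',
    Matrix.one_mul, ← Matrix.mul_assoc (rectDiagonal m α), rectDiagonal_mul_conjTranspose]

end GSVD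

theorem stmt0_general
    {m p n : ℕ} (hnm : n ≤ m)
    (A : Matrix (Fin m) (Fin n) ℂ) (B : Matrix (Fin p) (Fin n) ℂ)
    (U : Matrix (Fin m) (Fin m) ℂ) (hU : U ∈ Matrix.unitaryGroup (Fin m) ℂ)
    (R : Matrix (Fin n) (Fin n) ℂ) (hR : IsUnit R.det)
    (α : Fin n → ℝ)
    (hα0 : ∀ k, 0 ≤ α k) (hmono : Antitone α)
    (hA : A = U * (Matrix.of fun (k : Fin m) (l : Fin n) =>
        if (k : ℕ) = (l : ℕ) then Complex.ofReal (α l) else 0) * R)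
    (hBB : Bᴴ * B = Rᴴ * Matrix.diagonal (fun l => Complex.ofReal (1 - α l ^ 2)) * R)
    (i : Fin n) :
    α i ^ 2 =
(⨆ Φ : Matrix.unitaryGroup (Fin m) ℂ,
      (Matrix.trace (Aᴴ * (Φ : Matrix (Fin m) (Fin m) ℂ)ᴴ *
        Matrix.diagonal (fun k : Fin m => if (k : ℕ) ≤ (i : ℕ) then (1 : ℂ) else 0) *
        (Φ : Matrix (Fin m) (Fin m) ℂ) * A * (Aᴴ * A + Bᴴ * B)⁻¹)).re) -
(⨆ Φ : Matrix.unitaryGroup (Fin m) ℂ,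
      (Matrix.trace (Aᴴ * (Φ : Matrix (Fin m) (Fin m) ℂ)ᴴ *
        Matrix.diagonal (fun k : Fin m => if (k : ℕ) < (i : ℕ) then (1 : ℂ) else 0) *
        (Φ : Matrix (Fin m) (Fin m) ℂ) * A * (Aᴴ * A + Bᴴ * B)⁻¹)).re) := by
  set d := zeroExtend m fun l => α l ^ 2
  have hd : Antitone d := Antitone.zeroExtend
    (fun a b hab => pow_le_pow_left₀ (hα0 b) (hmono hab) 2) (fun l => sq_nonneg _)
  have hK := mul_inv_gram_mul_conjTranspose_of_gsvd hnm hU hR hA hBB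
  have hsup : ∀ k ≤ m, ⨆ Φ : unitaryGroup (Fin m) ℂ,
      (trace (Aᴴ * (Φ : Matrix (Fin m) (Fin m) ℂ)ᴴ * prefixProj m k *
        (Φ : Matrix (Fin m) (Fin m) ℂ) * A * (Aᴴ * A + Bᴴ * B)⁻¹)).re
        = ∑ j : Fin m with Fin.val j < k, d j := by
    intro k hk
    rw [← iSup_re_trace_prefixProj_mul_unitary_conj hU hd hk, ← hK]
    refine iSup_congr fun Φ => congrArg _ ?_
    simp only [Matrix.mul_assoc]
    rw [trace_mul_comm Aᴴ]
    simp only [Matrix.mul_assoc]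
    rw [trace_mul_comm (Φ : Matrix (Fin m) (Fin m) ℂ)ᴴ]
    simp only [Matrix.mul_assoc]
  have hQ : diagonal (fun k : Fin m => if (k : ℕ) ≤ i then (1 : ℂ) else 0)
      = prefixProj m (i + 1) := by
    simp only [prefixProj, Nat.lt_succ_iff]
  rw [hQ, hsup _ (by omega), show diagonal _ = prefixProj m i from rfl, hsup _ (by omega),
    sum_filter_lt_succ_sub_sum_filter_lt d (by omega)]
  simp [d, zeroExtend]

theorem stmt0
    {m p n : ℕ} (hnm : n ≤ m)
    (A : Matrix (Fin m) (Fin n) ℂ) (B : Matrix (Fin p) (Fin n) ℂ)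
    (hrank : (Matrix.fromRows A B).rank = n)
    (U : Matrix (Fin m) (Fin m) ℂ) (hU : U ∈ Matrix.unitaryGroup (Fin m) ℂ)
    (R : Matrix (Fin n) (Fin n) ℂ) (hR : IsUnit R.det)
    (α : Fin n → ℝ)
    (hα0 : ∀ k, 0 ≤ α k) (hα1 : ∀ k, α k ≤ 1) (hmono : Antitone α)
    (hA : A = U * (Matrix.of fun (k : Fin m) (l : Fin n) =>
        if (k : ℕ) = (l : ℕ) then Complex.ofReal (α l) else 0) * R)
    (hBB : Bᴴ * B = Rᴴ * Matrix.diagonal (fun l => Complex.ofReal (1 - α l ^ 2)) * R)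
    (i : Fin n) :
    α i ^ 2 =
(⨆ Φ : Matrix.unitaryGroup (Fin m) ℂ,
      (Matrix.trace (Aᴴ * (Φ : Matrix (Fin m) (Fin m) ℂ)ᴴ *
        Matrix.diagonal (fun k : Fin m => if (k : ℕ) ≤ (i : ℕ) then (1 : ℂ) else 0) *
        (Φ : Matrix (Fin m) (Fin m) ℂ) * A * (Aᴴ * A + Bᴴ * B)⁻¹)).re) -
(⨆ Φ : Matrix.unitaryGroup (Fin m) ℂ,
      (Matrix.trace (Aᴴ * (Φ : Matrix (Fin m) (Fin m) ℂ)ᴴ *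
        Matrix.diagonal (fun k : Fin m => if (k : ℕ) < (i : ℕ) then (1 : ℂ) else 0) *
        (Φ : Matrix (Fin m) (Fin m) ℂ) * A * (Aᴴ * A + Bᴴ * B)⁻¹)).re) :=
  stmt0_general hnm A B U hU R hR α hα0 hmono hA hBB i
end

section
/- Let n ≤ p and let {A,B} be an (m,p,n)-GMP with GSVD as in the context, with generalized singular values (αᵢ, βᵢ). Then for every 1 ≤ i ≤ n, βᵢ² equals the difference of maxima: βᵢ² = max_{Φ ∈ 𝕌_p} Re tr(Bᴴ Φᴴ P_i Φ B (AᴴA + BᴴB)^{-1}) − max_{Φ ∈ 𝕌_p} Re tr(Bᴴ Φᴴ P_{i+1} Φ B (AᴴA + BᴴB)^{-1}). -/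
/-!
Write `W = ΦV` and `D = Σ_B Σ_Bᴴ = diagonal d`. The GSVD gives `AᴴA + BᴴB = RᴴR`, and the
trace becomes `tr (P W D Wᴴ) = ∑ⱼ dⱼ wⱼ` with `wⱼ = ∑_{k ∈ S} |W_{kj}|²`, `S` the support
of `P`. Unitarity of `W` gives `0 ≤ wⱼ ≤ 1` and `∑ⱼ wⱼ = #S`; as `d` is nondecreasing and
`S` is a final segment, such a weighted sum is at most `∑_{j ∈ S} dⱼ`, with equality at
`W = 1`, i.e. `Φ = Vᴴ`. So both maxima are tail sums of `d`, and they differ by the single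
entry `d_{p-n+i} = βᵢ²`.
-/

open Matrix Finset

theorem Finset.sum_mul_le_sum_of_sum_eq_card {ι : Type*} [Fintype ι] (S : Finset ι)
    (d w : ι → ℝ) (hw₀ : ∀ j, 0 ≤ w j) (hw₁ : ∀ j, w j ≤ 1) (hw : ∑ j, w j = #S)
    (hd : ∀ j ∈ S, ∀ k ∉ S, d k ≤ d j) :
    ∑ j, d j * w j ≤ ∑ j ∈ S, d j := by
  classical
  obtain ⟨c, hcS, hcSc⟩ : ∃ c, (∀ j ∈ S, c ≤ d j) ∧ ∀ k ∉ S, d k ≤ c := by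
    rcases S.eq_empty_or_nonempty with rfl | hS
    · obtain ⟨c, hc⟩ := (Set.finite_range d).bddAbove
      exact ⟨c, by simp, fun k _ => hc ⟨k, rfl⟩⟩
    · obtain ⟨j₀, hj₀, hmin⟩ := S.exists_min_image d hS
      exact ⟨d j₀, hmin, fun k hk => hd j₀ hj₀ k hk⟩
  -- `c` separates `d` on `S` from `d` off `S`, so each `(d j - c) * (w j - 1_S j)` is `≤ 0`
  have hterm : ∀ j,
      d j * w j ≤ (if j ∈ S then d j else 0) + c * (w j - if j ∈ S then 1 else 0) := by
    intro j
    by_cases hj : j ∈ S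
    · simp only [if_pos hj]
      nlinarith [hcS j hj, hw₁ j]
    · simp only [if_neg hj]
      nlinarith [hcSc j hj, hw₀ j]
  calc ∑ j, d j * w j
      ≤ ∑ j, ((if j ∈ S then d j else 0) + c * (w j - if j ∈ S then 1 else 0)) :=
        sum_le_sum fun j _ => hterm j
    _ = ∑ j ∈ S, d j := by
        rw [sum_add_distrib, ← mul_sum, sum_sub_distrib, hw, sum_ite_mem, sum_ite_mem]
        simp

section Unitary

variable {ι : Type*} [Fintype ι] [DecidableEq ι] {U : Matrix ι ι ℂ}

theorem Matrix.sum_normSq_row_of_mem_unitaryGroup (hU : U ∈ unitaryGroup ι ℂ) (k : ι) :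
    ∑ j, Complex.normSq (U k j) = 1 := by
  have h : (U * Uᴴ) k k = 1 := by
    rw [← star_eq_conjTranspose, Unitary.mul_star_self_of_mem hU, one_apply_eq]
  simp only [mul_apply, conjTranspose_apply, Complex.star_def, Complex.mul_conj] at h
  exact_mod_cast h

theorem Matrix.sum_normSq_col_of_mem_unitaryGroup (hU : U ∈ unitaryGroup ι ℂ) (j : ι) :
    ∑ k, Complex.normSq (U k j) = 1 := by
  simpa using sum_normSq_row_of_mem_unitaryGroup (Unitary.star_mem hU) j

theorem Matrix.re_trace_projection_mul_conj_diagonal (S : Finset ι) (U : Matrix ι ι ℂ)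
    (d : ι → ℝ) :
    (trace (diagonal (fun k => if k ∈ S then 1 else 0) * U * diagonal (fun j => (d j : ℂ)) *
      Uᴴ)).re = ∑ j, d j * ∑ k ∈ S, Complex.normSq (U k j) := by
  rw [Matrix.mul_assoc, Matrix.mul_assoc]
  simp only [trace, diag, diagonal_mul]
  simp only [mul_apply, diagonal_apply, ite_mul, zero_mul, one_mul, sum_ite_eq, mem_univ, if_true,
    conjTranspose_apply, Complex.star_def, mul_left_comm (U _ _), Complex.mul_conj, sum_ite_mem,
    univ_inter, Complex.re_sum]
  rw [sum_comm]
  simp only [mul_sum, ← Complex.ofReal_mul, Complex.ofReal_re]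

theorem Matrix.re_trace_projection_mul_conj_diagonal_le (hU : U ∈ unitaryGroup ι ℂ)
    (S : Finset ι) (d : ι → ℝ) (hd : ∀ j ∈ S, ∀ k ∉ S, d k ≤ d j) :
    (trace (diagonal (fun k => if k ∈ S then 1 else 0) * U * diagonal (fun j => (d j : ℂ)) *
      Uᴴ)).re ≤ ∑ j ∈ S, d j := by
  rw [re_trace_projection_mul_conj_diagonal]
  refine S.sum_mul_le_sum_of_sum_eq_card d _
    (fun j => sum_nonneg fun k _ => Complex.normSq_nonneg _) (fun j => ?_) ?_ hd
  · calc ∑ k ∈ S, Complex.normSq (U k j) ≤ ∑ k, Complex.normSq (U k j) :=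
          sum_le_sum_of_subset_of_nonneg (subset_univ S) fun k _ _ => Complex.normSq_nonneg _
      _ = 1 := sum_normSq_col_of_mem_unitaryGroup hU j
  · rw [sum_comm]
    simp [sum_normSq_row_of_mem_unitaryGroup hU]

theorem Matrix.re_trace_projection_mul_diagonal (S : Finset ι) (d : ι → ℝ) :
    (trace (diagonal (fun k => if k ∈ S then 1 else 0) * diagonal (fun j => (d j : ℂ)))).re =
      ∑ j ∈ S, d j := by
  simp [diagonal_mul_diagonal, trace_diagonal, Complex.re_sum]

end Unitary

theorem Matrix.trace_conjTranspose_mul_mul_inv_gram {K ι κ : Type*} [Field K] [StarRing K]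
    [Fintype ι] [Fintype κ] [DecidableEq κ]
    (X : Matrix ι κ K) {R : Matrix κ κ K} (hR : IsUnit R.det) (Q : Matrix ι ι K) :
    trace ((X * R)ᴴ * Q * (X * R) * (Rᴴ * R)⁻¹) = trace (Q * X * Xᴴ) := by
  have hRH : IsUnit Rᴴ.det := by rw [det_conjTranspose]; exact hR.star
  have hcancel : X * R * (R⁻¹ * Rᴴ⁻¹) = X * Rᴴ⁻¹ := by
    rw [Matrix.mul_assoc, ← Matrix.mul_assoc R, mul_nonsing_inv _ hR, Matrix.one_mul]
  calc trace ((X * R)ᴴ * Q * (X * R) * (Rᴴ * R)⁻¹)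
      = trace (Rᴴ * (Xᴴ * Q * X * Rᴴ⁻¹)) := by
        rw [conjTranspose_mul, mul_inv_rev, Matrix.mul_assoc _ (X * R), hcancel]
        simp only [Matrix.mul_assoc]
    _ = trace (Xᴴ * Q * X) := by
        rw [trace_mul_comm, Matrix.mul_assoc _ Rᴴ⁻¹, nonsing_inv_mul _ hRH, Matrix.mul_one]
    _ = trace (Q * X * Xᴴ) := by
        rw [Matrix.mul_assoc, trace_mul_comm, Matrix.mul_assoc]

/-- The paper's `Σ_B`: a `(p - n) × n` zero block on top of `diagonal β`. -/
def gsvdSigmaB (p n : ℕ) (β : Fin n → ℝ) : Matrix (Fin p) (Fin n) ℂ :=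
  Matrix.of fun k l => if (k : ℕ) + n = p + (l : ℕ) then (β l : ℂ) else 0

def gsvdSigmaBSq (p n : ℕ) (β : Fin n → ℝ) (k : Fin p) : ℝ :=
  if h : p ≤ (k : ℕ) + n then β ⟨(k : ℕ) + n - p, by omega⟩ ^ 2 else 0

/-- The support of the paper's projection `P_{t+1}`: the last `n - t` rows. -/
def tailRows (p n t : ℕ) : Finset (Fin p) := {k | p + t ≤ (k : ℕ) + n}

section GSVD

variable {m p n : ℕ}

theorem conjTranspose_gsvdSigmaB_mul_self (hnp : n ≤ p) (β : Fin n → ℝ) :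
    (gsvdSigmaB p n β)ᴴ * gsvdSigmaB p n β = diagonal fun l => (β l : ℂ) ^ 2 := by
  ext l l'
  simp only [gsvdSigmaB, mul_apply, conjTranspose_apply, of_apply, apply_ite star, star_zero,
    Complex.star_def, Complex.conj_ofReal, ite_mul, mul_ite, zero_mul, mul_zero, diagonal_apply]
  split_ifs with hl
  · subst hl
    rw [sum_eq_single ⟨p + l - n, by omega⟩, if_pos (by simp; omega), if_pos (by simp; omega),
      sq]
    · intro k _ hk
      rw [if_neg fun h => hk (Fin.ext (by simp; omega))]
    · simp
  · refine sum_eq_zero fun k _ => ?_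
    rw [ite_eq_right_iff, ite_eq_right_iff]
    intro h h'
    exact absurd (Fin.ext (by omega)) hl

theorem gsvdSigmaB_mul_conjTranspose_self (β : Fin n → ℝ) :
    gsvdSigmaB p n β * (gsvdSigmaB p n β)ᴴ = diagonal fun k => (gsvdSigmaBSq p n β k : ℂ) := by
  ext k k'
  simp only [gsvdSigmaB, mul_apply, conjTranspose_apply, of_apply, apply_ite star, star_zero,
    Complex.star_def, Complex.conj_ofReal, ite_mul, mul_ite, zero_mul, mul_zero, diagonal_apply]
  split_ifs with hk
  · subst hk
    simp only [gsvdSigmaBSq]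
    split_ifs with h
    · rw [sum_eq_single ⟨k + n - p, by omega⟩, if_pos (by simp; omega)]
      · push_cast; ring
      · intro l _ hl
        rw [if_neg fun h' => hl (Fin.ext (by simp; omega))]
      · simp
    · exact_mod_cast sum_eq_zero fun l _ => if_neg (by omega)
  · refine sum_eq_zero fun l _ => ?_
    rw [ite_eq_right_iff, ite_eq_right_iff]
    intro h h'
    exact absurd (Fin.ext (by omega)) hk

theorem monotone_gsvdSigmaBSq {β : Fin n → ℝ} (hβ₀ : ∀ l, 0 ≤ β l) (hβ : Monotone β) :
    Monotone (gsvdSigmaBSq p n β) := by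
  intro k k' hkk'
  simp only [gsvdSigmaBSq]
  split_ifs with h h' h'
  · exact pow_le_pow_left₀ (hβ₀ _) (hβ (by simp [Fin.mk_le_mk]; omega)) 2
  · omega
  · positivity
  · rfl

theorem sum_tailRows_sub_sum_tailRows_succ (hnp : n ≤ p) (β : Fin n → ℝ) (i : Fin n) :
    ∑ k ∈ tailRows p n i, gsvdSigmaBSq p n β k -
      ∑ k ∈ tailRows p n (i + 1), gsvdSigmaBSq p n β k = β i ^ 2 := by
  set e : Fin p := ⟨p + i - n, by omega⟩
  have hsplit : tailRows p n i = insert e (tailRows p n (i + 1)) := by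
    ext k
    simp only [tailRows, mem_filter_univ, mem_insert, e, Fin.ext_iff]
    omega
  rw [hsplit, sum_insert (by simp [tailRows, e]; omega), add_sub_cancel_right, gsvdSigmaBSq,
    dif_pos (by simp [e]; omega)]
  congr 3
  simp [e]
  omega

variable {A : Matrix (Fin m) (Fin n) ℂ} {B : Matrix (Fin p) (Fin n) ℂ}
  {V : Matrix (Fin p) (Fin p) ℂ} {R : Matrix (Fin n) (Fin n) ℂ} {β : Fin n → ℝ}

theorem gsvd_gram_eq_conjTranspose_mul_self (hnp : n ≤ p) (hV : V ∈ unitaryGroup (Fin p) ℂ)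
    (hB : B = V * gsvdSigmaB p n β * R)
    (hAA : Aᴴ * A = Rᴴ * diagonal (fun l => ((1 - β l ^ 2 : ℝ) : ℂ)) * R) :
    Aᴴ * A + Bᴴ * B = Rᴴ * R := by
  have hBB : Bᴴ * B = Rᴴ * diagonal (fun l => (β l : ℂ) ^ 2) * R := by
    rw [hB, ← conjTranspose_gsvdSigmaB_mul_self hnp]
    simp only [conjTranspose_mul, Matrix.mul_assoc]
    have hVV : Vᴴ * V = 1 := Unitary.star_mul_self_of_mem hV
    rw [← Matrix.mul_assoc Vᴴ, hVV, Matrix.one_mul]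
  rw [hAA, hBB, ← add_mul, ← mul_add, diagonal_add]
  simp

theorem trace_gsvd_eq_trace_conj_diagonal (hnp : n ≤ p) (hV : V ∈ unitaryGroup (Fin p) ℂ)
    (hR : IsUnit R.det)
    (hB : B = V * gsvdSigmaB p n β * R)
    (hAA : Aᴴ * A = Rᴴ * diagonal (fun l => ((1 - β l ^ 2 : ℝ) : ℂ)) * R)
    (P Φ : Matrix (Fin p) (Fin p) ℂ) :
    trace (Bᴴ * Φᴴ * P * Φ * B * (Aᴴ * A + Bᴴ * B)⁻¹) =
      trace (P * (Φ * V) * diagonal (fun k => (gsvdSigmaBSq p n β k : ℂ)) * (Φ * V)ᴴ) := by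
  have hΦB : Bᴴ * Φᴴ * P * Φ * B =
      (Φ * V * gsvdSigmaB p n β * R)ᴴ * P * (Φ * V * gsvdSigmaB p n β * R) := by
    rw [hB]
    simp only [conjTranspose_mul, Matrix.mul_assoc]
  rw [hΦB, gsvd_gram_eq_conjTranspose_mul_self hnp hV hB hAA,
    trace_conjTranspose_mul_mul_inv_gram _ hR, ← gsvdSigmaB_mul_conjTranspose_self]
  simp only [conjTranspose_mul, Matrix.mul_assoc]

theorem iSup_re_trace_gsvd (hnp : n ≤ p) (hV : V ∈ unitaryGroup (Fin p) ℂ) (hR : IsUnit R.det)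
    (hβ₀ : ∀ l, 0 ≤ β l) (hβ : Monotone β) (hB : B = V * gsvdSigmaB p n β * R)
    (hAA : Aᴴ * A = Rᴴ * diagonal (fun l => ((1 - β l ^ 2 : ℝ) : ℂ)) * R) (t : ℕ) :
    ⨆ Φ : unitaryGroup (Fin p) ℂ,
        (trace (Bᴴ * (Φ : Matrix (Fin p) (Fin p) ℂ)ᴴ *
          diagonal (fun k : Fin p => if p + t ≤ (k : ℕ) + n then (1 : ℂ) else 0) *
          (Φ : Matrix (Fin p) (Fin p) ℂ) * B * (Aᴴ * A + Bᴴ * B)⁻¹)).re =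
      ∑ k ∈ tailRows p n t, gsvdSigmaBSq p n β k := by
  have hP : diagonal (fun k : Fin p => if p + t ≤ (k : ℕ) + n then (1 : ℂ) else 0) =
      diagonal fun k => if k ∈ tailRows p n t then 1 else 0 := by
    simp [tailRows]
  have hsep : ∀ j ∈ tailRows p n t, ∀ k ∉ tailRows p n t,
      gsvdSigmaBSq p n β k ≤ gsvdSigmaBSq p n β j := by
    intro j hj k hk
    simp only [tailRows, mem_filter_univ] at hj hk
    exact monotone_gsvdSigmaBSq hβ₀ hβ (Fin.le_iff_val_le_val.mpr (by omega))
  simp only [hP, trace_gsvd_eq_trace_conj_diagonal hnp hV hR hB hAA]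
  refine IsGreatest.csSup_eq ⟨⟨⟨star V, Unitary.star_mem hV⟩, ?_⟩, ?_⟩
  · show (trace (_ * (star V * V) * _ * (star V * V)ᴴ)).re = _
    rw [Unitary.star_mul_self_of_mem hV, Matrix.mul_one, conjTranspose_one, Matrix.mul_one]
    exact re_trace_projection_mul_diagonal _ _
  · rintro _ ⟨Φ, rfl⟩
    exact re_trace_projection_mul_conj_diagonal_le (mul_mem Φ.2 hV) _ _ hsep

end GSVD

theorem stmt1_general
    {m p n : ℕ} (hnp : n ≤ p)
    (A : Matrix (Fin m) (Fin n) ℂ) (B : Matrix (Fin p) (Fin n) ℂ)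
    (V : Matrix (Fin p) (Fin p) ℂ) (hV : V ∈ Matrix.unitaryGroup (Fin p) ℂ)
    (R : Matrix (Fin n) (Fin n) ℂ) (hR : IsUnit R.det)
    (β : Fin n → ℝ)
    (hβ0 : ∀ k, 0 ≤ β k) (hmono : Monotone β)
    (hB : B = V * (Matrix.of fun (k : Fin p) (l : Fin n) =>
        if (k : ℕ) + n = p + (l : ℕ) then Complex.ofReal (β l) else 0) * R)
    (hAA : Aᴴ * A = Rᴴ * Matrix.diagonal (fun l => Complex.ofReal (1 - β l ^ 2)) * R)
    (i : Fin n) :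
    β i ^ 2 =
(⨆ Φ : Matrix.unitaryGroup (Fin p) ℂ,
      (Matrix.trace (Bᴴ * (Φ : Matrix (Fin p) (Fin p) ℂ)ᴴ *
        Matrix.diagonal (fun k : Fin p => if p + (i : ℕ) ≤ (k : ℕ) + n then (1 : ℂ) else 0) *
        (Φ : Matrix (Fin p) (Fin p) ℂ) * B * (Aᴴ * A + Bᴴ * B)⁻¹)).re) -
(⨆ Φ : Matrix.unitaryGroup (Fin p) ℂ,
      (Matrix.trace (Bᴴ * (Φ : Matrix (Fin p) (Fin p) ℂ)ᴴ *
        Matrix.diagonal (fun k : Fin p => if p + (i : ℕ) + 1 ≤ (k : ℕ) + n then (1 : ℂ) else 0) *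
        (Φ : Matrix (Fin p) (Fin p) ℂ) * B * (Aᴴ * A + Bᴴ * B)⁻¹)).re) := by
  simp only [Nat.add_assoc p (i : ℕ) 1]
  rw [iSup_re_trace_gsvd hnp hV hR hβ0 hmono hB hAA (i + 1),
    iSup_re_trace_gsvd hnp hV hR hβ0 hmono hB hAA i, sum_tailRows_sub_sum_tailRows_succ hnp]

theorem stmt1
    {m p n : ℕ} (hnp : n ≤ p)
    (A : Matrix (Fin m) (Fin n) ℂ) (B : Matrix (Fin p) (Fin n) ℂ)
    (hrank : (Matrix.fromRows A B).rank = n)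
    (V : Matrix (Fin p) (Fin p) ℂ) (hV : V ∈ Matrix.unitaryGroup (Fin p) ℂ)
    (R : Matrix (Fin n) (Fin n) ℂ) (hR : IsUnit R.det)
    (β : Fin n → ℝ)
    (hβ0 : ∀ k, 0 ≤ β k) (hβ1 : ∀ k, β k ≤ 1) (hmono : Monotone β)
    (hB : B = V * (Matrix.of fun (k : Fin p) (l : Fin n) =>
        if (k : ℕ) + n = p + (l : ℕ) then Complex.ofReal (β l) else 0) * R)
    (hAA : Aᴴ * A = Rᴴ * Matrix.diagonal (fun l => Complex.ofReal (1 - β l ^ 2)) * R)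
    (i : Fin n) :
    β i ^ 2 =
(⨆ Φ : Matrix.unitaryGroup (Fin p) ℂ,
      (Matrix.trace (Bᴴ * (Φ : Matrix (Fin p) (Fin p) ℂ)ᴴ *
        Matrix.diagonal (fun k : Fin p => if p + (i : ℕ) ≤ (k : ℕ) + n then (1 : ℂ) else 0) *
        (Φ : Matrix (Fin p) (Fin p) ℂ) * B * (Aᴴ * A + Bᴴ * B)⁻¹)).re) -
(⨆ Φ : Matrix.unitaryGroup (Fin p) ℂ,
      (Matrix.trace (Bᴴ * (Φ : Matrix (Fin p) (Fin p) ℂ)ᴴ *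
        Matrix.diagonal (fun k : Fin p => if p + (i : ℕ) + 1 ≤ (k : ℕ) + n then (1 : ℂ) else 0) *
        (Φ : Matrix (Fin p) (Fin p) ℂ) * B * (Aᴴ * A + Bᴴ * B)⁻¹)).re) :=
  stmt1_general hnp A B V hV R hR β hβ0 hmono hB hAA i
end

section
/- Let n ≤ m and let {A,B} be an (m,p,n)-GMP with GSVD as in the context, with generalized singular values (αᵢ, βᵢ). Then for every 1 ≤ i ≤ n, αᵢ equals the difference of maxima: αᵢ = max_{Π₁ ∈ 𝕌_m, Π₂ ∈ 𝕌_n} |tr(Π₁ A (AᴴA + BᴴB)^{-1/2} Π₂ 𝒢_i)| − max_{Π₁ ∈ 𝕌_m, Π₂ ∈ 𝕌_n} |tr(Π₁ A (AᴴA + BᴴB)^{-1/2} Π₂ 𝒢_{i-1})|. -/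
open Matrix BigOperators
open scoped ComplexOrder

/-!
Write `A = U Σ R` with `Σ = (diag α; 0)`. Since `Rᴴ R = Aᴴ A + Bᴴ B = S²` with `S` Hermitian,
`Q = R S⁻¹` is unitary, so `A S⁻¹ = U Σ Q` and the `c`-th maximum is the maximum of
`|tr (V₁ Σ V₂ 𝒢_c)|` over unitary `V₁`, `V₂`. This trace is `∑_{l < c} ∑_a V₁ l a α_a V₂ a l`, so
its modulus is at most `∑_a α_a w_a` with `w_a = ∑_{l < c} |V₁ l a| |V₂ a l|`. By `2xy ≤ x² + y²`
on the unit rows and columns of `V₁`, `V₂`, every `w_a` lies in `[0, 1]` and `∑_a w_a ≤ c`; as `α`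
is decreasing, such a weighted sum is at most `α₁ + ⋯ + α_c`, which is attained at `V₁ = V₂ = 1`.
Consecutive maxima therefore differ by `α_c`.
-/

open Finset Function

theorem sum_mul_le_one_of_sum_sq_le_one {ι : Type*} (s : Finset ι) (u v : ι → ℝ)
    (hu : ∑ a ∈ s, u a ^ 2 ≤ 1) (hv : ∑ a ∈ s, v a ^ 2 ≤ 1) : ∑ a ∈ s, u a * v a ≤ 1 := by
  have h := sum_le_sum fun a (_ : a ∈ s) => two_mul_le_add_sq (u a) (v a)
  simp only [mul_assoc, ← mul_sum, sum_add_distrib] at h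
  linarith

theorem sum_mul_le_sum_of_le_threshold {ι : Type*} [Fintype ι] [DecidableEq ι] (s : Finset ι)
    {α w : ι → ℝ} {t : ℝ} (ht : 0 ≤ t) (hs : ∀ a ∈ s, t ≤ α a) (hsc : ∀ a ∉ s, α a ≤ t)
    (hw₀ : ∀ a, 0 ≤ w a) (hw₁ : ∀ a, w a ≤ 1) (hw : ∑ a, w a ≤ #s) :
    ∑ a, α a * w a ≤ ∑ a ∈ s, α a := by
  have key : ∀ a, α a * w a - (if a ∈ s then α a else 0) ≤
      t * (w a - if a ∈ s then 1 else 0) := by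
    intro a
    split_ifs with h
    · nlinarith [hs a h, hw₁ a]
    · nlinarith [hsc a h, hw₀ a]
  have h := sum_le_sum fun a (_ : a ∈ univ) => key a
  simp only [sum_sub_distrib, ← mul_sum, sum_ite_mem, univ_inter, sum_const, nsmul_one] at h
  nlinarith

theorem sum_comp_le_sum_of_injective {ι κ : Type*} [Fintype ι] [Fintype κ] {e : ι → κ}
    (he : Injective e) {f : κ → ℝ} (hf : ∀ k, 0 ≤ f k) : ∑ i, f (e i) ≤ ∑ k, f k :=
  (sum_map univ ⟨e, he⟩ f).symm.trans_le (sum_le_univ_sum_of_nonneg hf)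

namespace Matrix

section Contractions

variable {ι κ : Type*} [Fintype ι] [Fintype κ]

theorem sum_norm_sq_row_of_mem_unitaryGroup [DecidableEq ι] {U : Matrix ι ι ℂ}
    (hU : U ∈ unitaryGroup ι ℂ) (i : ι) : ∑ j, ‖U i j‖ ^ 2 = 1 := by
  have h := congrArg (fun M => M i i) (mem_unitaryGroup_iff.1 hU)
  simp only [mul_apply, star_apply, one_apply_eq, Complex.star_def, Complex.mul_conj'] at h
  exact_mod_cast h

theorem sum_norm_sq_col_of_mem_unitaryGroup [DecidableEq ι] {U : Matrix ι ι ℂ}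
    (hU : U ∈ unitaryGroup ι ℂ) (j : ι) : ∑ i, ‖U i j‖ ^ 2 = 1 := by
  simpa using sum_norm_sq_row_of_mem_unitaryGroup (Unitary.star_mem hU) j

def RowsColsInUnitBall (P : Matrix ι κ ℂ) : Prop :=
  (∀ i, ∑ j, ‖P i j‖ ^ 2 ≤ 1) ∧ ∀ j, ∑ i, ‖P i j‖ ^ 2 ≤ 1

theorem rowsColsInUnitBall_of_mem_unitaryGroup [DecidableEq ι] {U : Matrix ι ι ℂ}
    (hU : U ∈ unitaryGroup ι ℂ) : U.RowsColsInUnitBall :=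
  ⟨fun i => (sum_norm_sq_row_of_mem_unitaryGroup hU i).le,
    fun j => (sum_norm_sq_col_of_mem_unitaryGroup hU j).le⟩

theorem RowsColsInUnitBall.submatrix {ι' κ' : Type*} [Fintype ι'] [Fintype κ']
    {P : Matrix ι κ ℂ} (hP : P.RowsColsInUnitBall) {e₁ : ι' → ι} {e₂ : κ' → κ}
    (he₁ : Injective e₁) (he₂ : Injective e₂) : (P.submatrix e₁ e₂).RowsColsInUnitBall :=
  ⟨fun i => (sum_comp_le_sum_of_injective he₂ fun _ => sq_nonneg _).trans (hP.1 (e₁ i)),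
    fun j => (sum_comp_le_sum_of_injective he₁ fun _ => sq_nonneg _).trans (hP.2 (e₂ j))⟩

theorem trace_mul_diagonal_mul_diagonal [DecidableEq ι] (P V : Matrix ι ι ℂ) (d g : ι → ℂ) :
    trace (P * diagonal d * V * diagonal g) = ∑ l, ∑ a, P l a * d a * V a l * g l := by
  simp [trace, mul_apply, sum_mul, diagonal_apply]

theorem norm_trace_mul_diagonal_mul_diagonal_le [DecidableEq ι] {P V : Matrix ι ι ℂ}
    (hP : P.RowsColsInUnitBall) (hV : V.RowsColsInUnitBall) (s : Finset ι) {α : ι → ℝ} {t : ℝ}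
    (hα : ∀ a, 0 ≤ α a) (ht : 0 ≤ t) (hs : ∀ a ∈ s, t ≤ α a) (hsc : ∀ a ∉ s, α a ≤ t) :
    ‖trace (P * diagonal (fun a => (α a : ℂ)) * V *
        diagonal (fun l => if l ∈ s then 1 else 0))‖ ≤ ∑ a ∈ s, α a := by
  set w : ι → ℝ := fun a => ∑ l ∈ s, ‖P l a‖ * ‖V a l‖
  have hw₀ : ∀ a, 0 ≤ w a := fun a => sum_nonneg fun l _ => by positivity
  have hw₁ : ∀ a, w a ≤ 1 := fun a =>
    (sum_le_univ_sum_of_nonneg fun l => by positivity).trans <|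
      sum_mul_le_one_of_sum_sq_le_one _ _ _ (hP.2 a) (hV.1 a)
  have hw : ∑ a, w a ≤ #s := by
    rw [sum_comm, card_eq_sum_ones, Nat.cast_sum]
    exact sum_le_sum fun l _ => by
      simpa using sum_mul_le_one_of_sum_sq_le_one _ _ _ (hP.1 l) (hV.2 l)
  calc _ = ‖∑ l ∈ s, ∑ a, P l a * α a * V a l‖ := by
        rw [trace_mul_diagonal_mul_diagonal]
        simp
    _ ≤ ∑ l ∈ s, ∑ a, ‖P l a‖ * α a * ‖V a l‖ := by
        refine (norm_sum_le _ _).trans (sum_le_sum fun l _ => (norm_sum_le _ _).trans_eq ?_)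
        simp [Complex.norm_real, abs_of_nonneg (hα _)]
    _ = ∑ a, α a * w a := by
        rw [sum_comm]
        simp only [w, mul_sum]
        exact sum_congr rfl fun a _ => sum_congr rfl fun l _ => by ring
    _ ≤ ∑ a ∈ s, α a := sum_mul_le_sum_of_le_threshold s ht hs hsc hw₀ hw₁ hw

end Contractions

section Inclusion

variable {ι κ : Type*} [Fintype κ] [DecidableEq κ]

def inclusionMatrix (e : ι → κ) : Matrix κ ι ℂ :=
  (1 : Matrix κ κ ℂ).submatrix id e

theorem conjTranspose_inclusionMatrix_mul_mul (e : ι → κ) (X : Matrix κ κ ℂ) :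
    (inclusionMatrix e)ᴴ * X * inclusionMatrix e = X.submatrix e e := by
  ext i j
  simp [inclusionMatrix, mul_apply, one_apply]

theorem conjTranspose_inclusionMatrix_mul_self [DecidableEq ι] {e : ι → κ} (he : Injective e) :
    (inclusionMatrix e)ᴴ * inclusionMatrix e = 1 := by
  simpa using conjTranspose_inclusionMatrix_mul_mul e 1 |>.trans (submatrix_one e he)

theorem trace_mul_inclusionMatrix_mul [Fintype ι] [DecidableEq ι] (e : ι → κ)
    (V₁ : Matrix κ κ ℂ) (V₂ : Matrix ι ι ℂ) (d g : ι → ℂ) :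
    trace (V₁ * (inclusionMatrix e * diagonal d) * V₂ * (diagonal g * (inclusionMatrix e)ᴴ)) =
      trace (V₁.submatrix e e * diagonal d * V₂ * diagonal g) := by
  rw [← conjTranspose_inclusionMatrix_mul_mul, ← Matrix.mul_assoc (_ * V₂), trace_mul_comm]
  simp only [Matrix.mul_assoc]

theorem of_castLE_eq_inclusionMatrix_mul_diagonal {m n : ℕ} (hnm : n ≤ m) (d : Fin n → ℂ) :
    (of fun (k : Fin m) (l : Fin n) => if (k : ℕ) = l then d l else 0) =
      inclusionMatrix (Fin.castLE hnm) * diagonal d := by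
  ext k l
  simp [inclusionMatrix, one_apply, Fin.ext_iff]

theorem of_castLE_eq_diagonal_mul_conjTranspose_inclusionMatrix {m n : ℕ} (hnm : n ≤ m)
    (q : Fin n → Prop) [DecidablePred q] (s : Finset (Fin n)) (hqs : ∀ k, q k ↔ k ∈ s) :
    (of fun (k : Fin n) (l : Fin m) => if (k : ℕ) = l ∧ q k then (1 : ℂ) else 0) =
      diagonal (fun l => if l ∈ s then (1 : ℂ) else 0) * (inclusionMatrix (Fin.castLE hnm))ᴴ := by
  ext k l
  simp [inclusionMatrix, diagonal_mul, one_apply, Fin.ext_iff, eq_comm, hqs, ite_and]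

end Inclusion

variable {ι κ : Type*} [Fintype ι] [DecidableEq ι] [Fintype κ] [DecidableEq κ]

theorem iSup_norm_trace_mul_eq_sum {e : ι → κ} (he : Injective e) {U : Matrix κ κ ℂ}
    (hU : U ∈ unitaryGroup κ ℂ) {Q : Matrix ι ι ℂ} (hQ : Q ∈ unitaryGroup ι ℂ) (s : Finset ι)
    {α : ι → ℝ} {t : ℝ} (hα : ∀ a, 0 ≤ α a) (ht : 0 ≤ t) (hs : ∀ a ∈ s, t ≤ α a)
    (hsc : ∀ a ∉ s, α a ≤ t) :
    ⨆ W₁ : unitaryGroup κ ℂ, ⨆ W₂ : unitaryGroup ι ℂ,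
      ‖trace ((W₁ : Matrix κ κ ℂ) * (U * (inclusionMatrix e * diagonal fun a => (α a : ℂ)) * Q) *
        (W₂ : Matrix ι ι ℂ) *
        (diagonal (fun l => if l ∈ s then (1 : ℂ) else 0) * (inclusionMatrix e)ᴴ))‖ =
      ∑ a ∈ s, α a := by
  set f : unitaryGroup κ ℂ → unitaryGroup ι ℂ → ℝ := fun W₁ W₂ =>
    ‖trace ((W₁ : Matrix κ κ ℂ) * (U * (inclusionMatrix e * diagonal fun a => (α a : ℂ)) * Q) *
        (W₂ : Matrix ι ι ℂ) *
        (diagonal (fun l => if l ∈ s then (1 : ℂ) else 0) * (inclusionMatrix e)ᴴ))‖ with hf_def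
  have hf : ∀ W₁ W₂, f W₁ W₂ = ‖trace (((W₁ : Matrix κ κ ℂ) * U).submatrix e e *
      diagonal (fun a => (α a : ℂ)) * (Q * (W₂ : Matrix ι ι ℂ)) *
      diagonal fun l => if l ∈ s then (1 : ℂ) else 0)‖ := by
    intro W₁ W₂
    rw [hf_def, ← trace_mul_inclusionMatrix_mul]
    simp only [Matrix.mul_assoc]
  have hle : ∀ W₁ W₂, f W₁ W₂ ≤ ∑ a ∈ s, α a := fun W₁ W₂ =>
    (hf W₁ W₂).trans_le <| norm_trace_mul_diagonal_mul_diagonal_le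
      ((rowsColsInUnitBall_of_mem_unitaryGroup (mul_mem W₁.2 hU)).submatrix he he)
      (rowsColsInUnitBall_of_mem_unitaryGroup (mul_mem hQ W₂.2)) s hα ht hs hsc
  have hattain : f ⟨star U, Unitary.star_mem hU⟩ ⟨star Q, Unitary.star_mem hQ⟩ =
      ∑ a ∈ s, α a := by
    rw [hf]
    simp only [mem_unitaryGroup_iff'.1 hU, submatrix_one e he, one_mul,
      mem_unitaryGroup_iff.1 hQ, mul_one, diagonal_mul_diagonal, mul_ite, mul_zero, trace_diagonal,
      sum_ite_mem, univ_inter]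
    rw [← Complex.ofReal_sum, Complex.norm_real, Real.norm_of_nonneg (sum_nonneg fun a _ => hα a)]
  refine le_antisymm (ciSup_le fun W₁ => ciSup_le fun W₂ => hle W₁ W₂) ?_
  have hbdd : ∀ W₁, BddAbove (Set.range (f W₁)) := fun W₁ =>
    ⟨_, Set.forall_mem_range.2 (hle W₁)⟩
  refine le_ciSup_of_le ⟨_, Set.forall_mem_range.2 fun W₁ => ciSup_le (hle W₁)⟩
    ⟨star U, Unitary.star_mem hU⟩ ?_
  exact le_ciSup_of_le (hbdd _) ⟨star Q, Unitary.star_mem hQ⟩ hattain.ge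

theorem mul_inv_mem_unitaryGroup_of_conjTranspose_mul_self {R S : Matrix ι ι ℂ}
    (hS : S.IsHermitian) (hSdet : IsUnit S.det) (hRS : Rᴴ * R = S * S) :
    R * S⁻¹ ∈ unitaryGroup ι ℂ := by
  rw [mem_unitaryGroup_iff', star_eq_conjTranspose, conjTranspose_mul, conjTranspose_nonsing_inv,
    hS.eq]
  calc S⁻¹ * Rᴴ * (R * S⁻¹) = (S⁻¹ * S) * (S * S⁻¹) := by
        simp only [Matrix.mul_assoc, ← Matrix.mul_assoc Rᴴ, hRS]
    _ = 1 := by rw [nonsing_inv_mul S hSdet, mul_nonsing_inv S hSdet, Matrix.one_mul]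

theorem conjTranspose_mul_self_add_eq_of_gsvd {π : Type*} [Fintype π] {e : ι → κ}
    (he : Injective e) {U : Matrix κ κ ℂ} (hU : U ∈ unitaryGroup κ ℂ) {R : Matrix ι ι ℂ}
    {α : ι → ℝ} {A : Matrix κ ι ℂ} {B : Matrix π ι ℂ}
    (hA : A = U * (inclusionMatrix e * diagonal fun a => (α a : ℂ)) * R)
    (hBB : Bᴴ * B = Rᴴ * diagonal (fun a => ((1 - α a ^ 2 : ℝ) : ℂ)) * R) :
    Aᴴ * A + Bᴴ * B = Rᴴ * R := by
  have hAA : Aᴴ * A = Rᴴ * diagonal (fun a => ((α a ^ 2 : ℝ) : ℂ)) * R := by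
    calc Aᴴ * A = Rᴴ * (diagonal fun a => (α a : ℂ))ᴴ * ((inclusionMatrix e)ᴴ * (Uᴴ * U) *
          inclusionMatrix e) * (diagonal fun a => (α a : ℂ)) * R := by
          simp only [hA, conjTranspose_mul, Matrix.mul_assoc]
      _ = _ := by
          rw [← star_eq_conjTranspose U, mem_unitaryGroup_iff'.1 hU, Matrix.mul_one,
            conjTranspose_inclusionMatrix_mul_self he, Matrix.mul_one, diagonal_conjTranspose,
            Matrix.mul_assoc Rᴴ, diagonal_mul_diagonal]
          simp [sq]
  rw [hAA, hBB, ← Matrix.add_mul, ← Matrix.mul_add, diagonal_add]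
  simp

end Matrix

theorem stmt4_general
    {m p n : ℕ} (hnm : n ≤ m)
    (A : Matrix (Fin m) (Fin n) ℂ) (B : Matrix (Fin p) (Fin n) ℂ)
    (U : Matrix (Fin m) (Fin m) ℂ) (hU : U ∈ Matrix.unitaryGroup (Fin m) ℂ)
    (R : Matrix (Fin n) (Fin n) ℂ)
    (α : Fin n → ℝ)
    (hα0 : ∀ k, 0 ≤ α k) (hmono : Antitone α)
    (hA : A = U * (Matrix.of fun (k : Fin m) (l : Fin n) =>
        if (k : ℕ) = (l : ℕ) then Complex.ofReal (α l) else 0) * R)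
    (hBB : Bᴴ * B = Rᴴ * Matrix.diagonal (fun l => Complex.ofReal (1 - α l ^ 2)) * R)
    (S : Matrix (Fin n) (Fin n) ℂ) (hS : S.PosDef)
    (hSsq : S * S = Aᴴ * A + Bᴴ * B)
    (i : Fin n) :
    α i =
(⨆ W1 : Matrix.unitaryGroup (Fin m) ℂ, ⨆ W2 : Matrix.unitaryGroup (Fin n) ℂ,
      ‖(Matrix.trace ((W1 : Matrix (Fin m) (Fin m) ℂ) * A * S⁻¹ *
        (W2 : Matrix (Fin n) (Fin n) ℂ) *
        Matrix.of (fun (k : Fin n) (l : Fin m) =>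
          if (k : ℕ) = (l : ℕ) ∧ (k : ℕ) ≤ (i : ℕ) then (1 : ℂ) else 0)))‖) -
(⨆ W1 : Matrix.unitaryGroup (Fin m) ℂ, ⨆ W2 : Matrix.unitaryGroup (Fin n) ℂ,
      ‖(Matrix.trace ((W1 : Matrix (Fin m) (Fin m) ℂ) * A * S⁻¹ *
        (W2 : Matrix (Fin n) (Fin n) ℂ) *
        Matrix.of (fun (k : Fin n) (l : Fin m) =>
          if (k : ℕ) = (l : ℕ) ∧ (k : ℕ) < (i : ℕ) then (1 : ℂ) else 0)))‖) := by
  have he := Fin.castLE_injective hnm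
  rw [of_castLE_eq_inclusionMatrix_mul_diagonal hnm] at hA
  have hQ := mul_inv_mem_unitaryGroup_of_conjTranspose_mul_self hS.isHermitian
    ((isUnit_iff_isUnit_det S).1 hS.isUnit)
    (hSsq.trans (conjTranspose_mul_self_add_eq_of_gsvd he hU hA hBB)).symm
  have hAS : ∀ W : Matrix (Fin m) (Fin m) ℂ, W * A * S⁻¹ = W *
      (U * (inclusionMatrix (Fin.castLE hnm) * diagonal fun a => (α a : ℂ)) * (R * S⁻¹)) := by
    intro W
    rw [hA]
    simp only [Matrix.mul_assoc]
  rw [of_castLE_eq_diagonal_mul_conjTranspose_inclusionMatrix hnm (fun k => (k : ℕ) ≤ i)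
      (Iic i) fun _ => by simp,
    of_castLE_eq_diagonal_mul_conjTranspose_inclusionMatrix hnm (fun k => (k : ℕ) < i)
      (Iio i) fun _ => by simp]
  simp only [hAS]
  rw [iSup_norm_trace_mul_eq_sum he hU hQ (Iic i) hα0 (hα0 i) (fun a ha => hmono (mem_Iic.1 ha))
      (fun a ha => hmono (not_le.1 (mt mem_Iic.2 ha)).le),
    iSup_norm_trace_mul_eq_sum he hU hQ (Iio i) hα0 (hα0 i) (fun a ha => hmono (mem_Iio.1 ha).le)
      (fun a ha => hmono (not_lt.1 (mt mem_Iio.2 ha))),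
    ← Iio_insert, sum_insert (by simp)]
  ring

theorem stmt4
    {m p n : ℕ} (hnm : n ≤ m)
    (A : Matrix (Fin m) (Fin n) ℂ) (B : Matrix (Fin p) (Fin n) ℂ)
    (hrank : (Matrix.fromRows A B).rank = n)
    (U : Matrix (Fin m) (Fin m) ℂ) (hU : U ∈ Matrix.unitaryGroup (Fin m) ℂ)
    (R : Matrix (Fin n) (Fin n) ℂ) (hR : IsUnit R.det)
    (α : Fin n → ℝ)
    (hα0 : ∀ k, 0 ≤ α k) (hα1 : ∀ k, α k ≤ 1) (hmono : Antitone α)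
    (hA : A = U * (Matrix.of fun (k : Fin m) (l : Fin n) =>
        if (k : ℕ) = (l : ℕ) then Complex.ofReal (α l) else 0) * R)
    (hBB : Bᴴ * B = Rᴴ * Matrix.diagonal (fun l => Complex.ofReal (1 - α l ^ 2)) * R)
    (S : Matrix (Fin n) (Fin n) ℂ) (hS : S.PosDef)
    (hSsq : S * S = Aᴴ * A + Bᴴ * B)
    (i : Fin n) :
    α i =
(⨆ W1 : Matrix.unitaryGroup (Fin m) ℂ, ⨆ W2 : Matrix.unitaryGroup (Fin n) ℂ,
      ‖(Matrix.trace ((W1 : Matrix (Fin m) (Fin m) ℂ) * A * S⁻¹ *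
        (W2 : Matrix (Fin n) (Fin n) ℂ) *
        Matrix.of (fun (k : Fin n) (l : Fin m) =>
          if (k : ℕ) = (l : ℕ) ∧ (k : ℕ) ≤ (i : ℕ) then (1 : ℂ) else 0)))‖) -
(⨆ W1 : Matrix.unitaryGroup (Fin m) ℂ, ⨆ W2 : Matrix.unitaryGroup (Fin n) ℂ,
      ‖(Matrix.trace ((W1 : Matrix (Fin m) (Fin m) ℂ) * A * S⁻¹ *
        (W2 : Matrix (Fin n) (Fin n) ℂ) *
        Matrix.of (fun (k : Fin n) (l : Fin m) =>
          if (k : ℕ) = (l : ℕ) ∧ (k : ℕ) < (i : ℕ) then (1 : ℂ) else 0)))‖) :=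
  stmt4_general hnm A B U hU R α hα0 hmono hA hBB S hS hSsq i
end

section
/- Let n ≤ p and let {A,B} be an (m,p,n)-GMP with GSVD as in the context, with generalized singular values (αᵢ, βᵢ). Then for every 1 ≤ i ≤ n, βᵢ equals the difference of maxima: βᵢ = max_{Ξ₁ ∈ 𝕌_p, Ξ₂ ∈ 𝕌_n} |tr(Ξ₁ B (AᴴA + BᴴB)^{-1/2} Ξ₂ ℋ_i)| − max_{Ξ₁ ∈ 𝕌_p, Ξ₂ ∈ 𝕌_n} |tr(Ξ₁ B (AᴴA + BᴴB)^{-1/2} Ξ₂ ℋ_{i+1})|. -/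
open Matrix Finset
open scoped ComplexOrder

/-!
With `U := R S⁻¹`, which is unitary because `RᴴR = AᴴA + BᴴB = S²`, we have `B S⁻¹ = V Σ_B U`.
For unitary `Q = Ξ₁ V` and `W = U Ξ₂` the trace against `ℋ_i` is `∑_{d ≥ i} ∑_c Q_{dc} β_c W_{cd}`
(indices of `Q` taken in the last `n` rows and columns). By AM-GM on rows and columns of unitaries
the weights `t_c = ∑_{d ≥ i} |Q_{dc}| |W_{cd}|` lie in `[0, 1]` and have total at most `n - i + 1`,
so, `β` being increasing, the modulus of the trace is at most `β_i + ⋯ + β_n`; the choice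
`Ξ₁ = Vᴴ`, `Ξ₂ = Uᴴ` attains it. The two maxima thus differ by `β_i`.
-/

namespace GSVD

theorem ciSup₂_eq_of_forall_le_of_eq {α β γ : Type*} [ConditionallyCompleteLattice γ]
    [Nonempty α] [Nonempty β] {f : α → β → γ} {c : γ} (h : ∀ a b, f a b ≤ c)
    {a₀ : α} {b₀ : β} (h₀ : f a₀ b₀ = c) : ⨆ a, ⨆ b, f a b = c := by
  have inner : ⨆ b, f a₀ b = c :=
    le_antisymm (ciSup_le (h a₀)) (h₀ ▸ le_ciSup ⟨c, Set.forall_mem_range.2 (h a₀)⟩ b₀)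
  exact le_antisymm (ciSup_le fun a => ciSup_le (h a))
    (inner ▸ le_ciSup ⟨c, Set.forall_mem_range.2 fun a => ciSup_le (h a)⟩ a₀)

theorem sum_mul_le_one_of_sum_sq_le_one {ι : Type*} {s : Finset ι} {f g : ι → ℝ}
    (hf : ∑ i ∈ s, f i ^ 2 ≤ 1) (hg : ∑ i ∈ s, g i ^ 2 ≤ 1) : ∑ i ∈ s, f i * g i ≤ 1 := by
  have h : ∑ i ∈ s, 2 * (f i * g i) ≤ ∑ i ∈ s, (f i ^ 2 + g i ^ 2) :=
    sum_le_sum fun i _ => by nlinarith [sq_nonneg (f i - g i)]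
  rw [← mul_sum, sum_add_distrib] at h
  linarith

theorem sum_mul_le_sum_of_threshold {ι : Type*} [Fintype ι] [DecidableEq ι] {β t : ι → ℝ}
    {F : Finset ι} {b : ℝ} (hb : 0 ≤ b) (hlow : ∀ c ∉ F, β c ≤ b) (hhigh : ∀ d ∈ F, b ≤ β d)
    (ht0 : ∀ c, 0 ≤ t c) (ht1 : ∀ c, t c ≤ 1) (hsum : ∑ c, t c ≤ #F) :
    ∑ c, β c * t c ≤ ∑ c ∈ F, β c := by
  have hF : ∑ c ∈ F, (β c - b) * (t c - 1) ≤ 0 :=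
    sum_nonpos fun c hc => mul_nonpos_of_nonneg_of_nonpos (by linarith [hhigh c hc])
      (by linarith [ht1 c])
  have hFc : ∑ c ∈ Fᶜ, (β c - b) * t c ≤ 0 :=
    sum_nonpos fun c hc => mul_nonpos_of_nonpos_of_nonneg
      (by linarith [hlow c (mem_compl.1 hc)]) (ht0 c)
  have hmass : b * (∑ c, t c - #F) ≤ 0 := mul_nonpos_of_nonneg_of_nonpos hb (by linarith)
  rw [← sum_add_sum_compl F (fun c => β c * t c)]
  rw [← sum_add_sum_compl F t] at hmass
  simp only [sub_mul, mul_sub, mul_one, sum_sub_distrib, ← mul_sum, sum_const,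
    nsmul_eq_mul] at hF hFc
  linarith

section Unitary

variable {ι κ : Type*} [Fintype κ] [DecidableEq κ] {U : Matrix κ κ ℂ}

theorem sum_norm_sq_row_eq_one (hU : U ∈ unitaryGroup κ ℂ) (a : κ) :
    ∑ b, ‖U a b‖ ^ 2 = 1 := by
  have h := congr_fun₂ (mem_unitaryGroup_iff.1 hU) a a
  simp only [mul_apply, star_apply, one_apply_eq, ← starRingEnd_apply, Complex.mul_conj,
    Complex.normSq_eq_norm_sq] at h
  exact_mod_cast h

theorem sum_norm_sq_col_eq_one (hU : U ∈ unitaryGroup κ ℂ) (b : κ) :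
    ∑ a, ‖U a b‖ ^ 2 = 1 := by
  simpa [star_apply, norm_star] using sum_norm_sq_row_eq_one (Unitary.star_mem hU) b

theorem sum_norm_sq_row_le_one (hU : U ∈ unitaryGroup κ ℂ) (e : ι ↪ κ) (s : Finset ι)
    (a : κ) : ∑ d ∈ s, ‖U a (e d)‖ ^ 2 ≤ 1 :=
  (sum_map s e fun b => ‖U a b‖ ^ 2).symm.trans_le <|
    (sum_le_univ_sum_of_nonneg fun _ => sq_nonneg _).trans_eq (sum_norm_sq_row_eq_one hU a)

theorem sum_norm_sq_col_le_one (hU : U ∈ unitaryGroup κ ℂ) (e : ι ↪ κ) (s : Finset ι)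
    (b : κ) : ∑ d ∈ s, ‖U (e d) b‖ ^ 2 ≤ 1 :=
  (sum_map s e fun a => ‖U a b‖ ^ 2).symm.trans_le <|
    (sum_le_univ_sum_of_nonneg fun _ => sq_nonneg _).trans_eq (sum_norm_sq_col_eq_one hU b)

end Unitary

theorem mul_inv_mem_unitaryGroup_of_conjTranspose_mul_self_eq {n : Type*} [Fintype n]
    [DecidableEq n] {R S : Matrix n n ℂ} (hS : S.IsHermitian) (hSu : IsUnit S)
    (hRS : Rᴴ * R = S * S) :
    R * S⁻¹ ∈ unitaryGroup n ℂ := by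
  have hdet : IsUnit S.det := (isUnit_iff_isUnit_det S).1 hSu
  rw [mem_unitaryGroup_iff', star_eq_conjTranspose, conjTranspose_mul, conjTranspose_nonsing_inv,
    hS.eq]
  calc S⁻¹ * Rᴴ * (R * S⁻¹) = S⁻¹ * (Rᴴ * R) * S⁻¹ := by noncomm_ring
    _ = (S⁻¹ * S) * (S * S⁻¹) := by rw [hRS]; noncomm_ring
    _ = 1 := by rw [nonsing_inv_mul S hdet, mul_nonsing_inv S hdet, one_mul]

section Embedded

variable {ι κ : Type*} [DecidableEq κ] (e : ι ↪ κ)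

-- For `e = bottomEmbedding` below, `embedDiagonal e β` is the paper's `Σ_B` and
-- `embedSelector e (Ici i)` its `ℋ_i`.
def embedDiagonal (β : ι → ℝ) : Matrix κ ι ℂ :=
  of fun k l => if k = e l then (β l : ℂ) else 0

def embedSelector [DecidableEq ι] (F : Finset ι) : Matrix ι κ ℂ :=
  of fun d a => if a = e d ∧ d ∈ F then 1 else 0

variable {e}

theorem embedDiagonal_apply_self (β : ι → ℝ) (l : ι) : embedDiagonal e β (e l) l = β l := by
  simp [embedDiagonal]

variable [Fintype κ]

theorem mul_embedDiagonal_apply (X : Matrix κ κ ℂ) (β : ι → ℝ) (a : κ) (c : ι) :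
    (X * embedDiagonal e β) a c = X a (e c) * β c := by
  simp [embedDiagonal, mul_apply]

theorem trace_mul_embedSelector [Fintype ι] [DecidableEq ι] (M : Matrix κ ι ℂ) (F : Finset ι) :
    trace (M * embedSelector e F) = ∑ d ∈ F, M (e d) d := by
  rw [trace_mul_comm]
  simp [trace, embedSelector, mul_apply, ite_and, sum_ite_mem]

theorem embedDiagonal_conjTranspose_mul_self [DecidableEq ι] (β : ι → ℝ) :
    (embedDiagonal e β)ᴴ * embedDiagonal e β = diagonal fun l => (β l : ℂ) ^ 2 := by
  ext l l'
  by_cases h : l = l'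
  · subst h
    simp [embedDiagonal, mul_apply, sq]
  · simp [embedDiagonal, mul_apply, h, Ne.symm h]

theorem conjTranspose_mul_self_of_eq_mul_embedDiagonal_mul [Fintype ι] [DecidableEq ι]
    {B : Matrix κ ι ℂ} {V : Matrix κ κ ℂ} (hV : V ∈ unitaryGroup κ ℂ) {β : ι → ℝ}
    {R : Matrix ι ι ℂ} (hB : B = V * embedDiagonal e β * R) :
    Bᴴ * B = Rᴴ * diagonal (fun l => (β l : ℂ) ^ 2) * R := by
  have hVV : Vᴴ * V = 1 := mem_unitaryGroup_iff'.1 hV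
  simp only [hB, conjTranspose_mul, Matrix.mul_assoc]
  rw [← Matrix.mul_assoc Vᴴ, hVV, Matrix.one_mul, ← Matrix.mul_assoc (embedDiagonal e β)ᴴ,
    embedDiagonal_conjTranspose_mul_self]

theorem conjTranspose_mul_self_add_eq_of_gsvd [Fintype ι] [DecidableEq ι] {μ : Type*}
    [Fintype μ] {A : Matrix μ ι ℂ} {B : Matrix κ ι ℂ} {V : Matrix κ κ ℂ}
    (hV : V ∈ unitaryGroup κ ℂ) {β : ι → ℝ} {R : Matrix ι ι ℂ}
    (hB : B = V * embedDiagonal e β * R)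
    (hA : Aᴴ * A = Rᴴ * diagonal (fun l => ((1 - β l ^ 2 : ℝ) : ℂ)) * R) :
    Aᴴ * A + Bᴴ * B = Rᴴ * R := by
  have hsum : (fun l => ((1 - β l ^ 2 : ℝ) : ℂ) + (β l : ℂ) ^ 2) = fun _ => 1 :=
    funext fun l => by push_cast; ring
  rw [hA, conjTranspose_mul_self_of_eq_mul_embedDiagonal_mul hV hB, ← add_mul, ← mul_add,
    diagonal_add, hsum, diagonal_one, Matrix.mul_one]

theorem trace_mul_embedDiagonal_mul_mul_embedSelector [Fintype ι] [DecidableEq ι]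
    (X : Matrix κ κ ℂ) (β : ι → ℝ) (W : Matrix ι ι ℂ) (F : Finset ι) :
    trace (X * embedDiagonal e β * W * embedSelector e F) =
      ∑ d ∈ F, ∑ c, X (e d) (e c) * β c * W c d := by
  simp only [trace_mul_embedSelector, mul_apply (M := X * embedDiagonal e β),
    mul_embedDiagonal_apply]

theorem norm_trace_mul_embedDiagonal_mul_mul_embedSelector_le [Fintype ι] [DecidableEq ι]
    {Q : Matrix κ κ ℂ} (hQ : Q ∈ unitaryGroup κ ℂ) {W : Matrix ι ι ℂ} (hW : W ∈ unitaryGroup ι ℂ)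
    {β : ι → ℝ} (hβ : ∀ c, 0 ≤ β c) {F : Finset ι} {b : ℝ} (hb : 0 ≤ b)
    (hlow : ∀ c ∉ F, β c ≤ b) (hhigh : ∀ d ∈ F, b ≤ β d) :
    ‖trace (Q * embedDiagonal e β * W * embedSelector e F)‖ ≤ ∑ d ∈ F, β d := by
  set t : ι → ℝ := fun c => ∑ d ∈ F, ‖Q (e d) (e c)‖ * ‖W c d‖
  have ht0 : ∀ c, 0 ≤ t c := fun c => sum_nonneg fun d _ => by positivity
  have ht1 : ∀ c, t c ≤ 1 := fun c => sum_mul_le_one_of_sum_sq_le_one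
    (sum_norm_sq_col_le_one hQ e F (e c)) (sum_norm_sq_row_le_one hW (.refl ι) F c)
  have hsum : ∑ c, t c ≤ #F := by
    rw [sum_comm, ← nsmul_one, ← sum_const]
    exact sum_le_sum fun d _ => sum_mul_le_one_of_sum_sq_le_one
      (sum_norm_sq_row_le_one hQ e univ (e d)) (sum_norm_sq_col_eq_one hW d).le
  calc ‖trace (Q * embedDiagonal e β * W * embedSelector e F)‖
      ≤ ∑ d ∈ F, ∑ c, ‖Q (e d) (e c) * β c * W c d‖ := by
        rw [trace_mul_embedDiagonal_mul_mul_embedSelector]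
        exact (norm_sum_le _ _).trans (sum_le_sum fun d _ => norm_sum_le _ _)
    _ = ∑ c, β c * t c := by
        rw [sum_comm]
        simp only [t, mul_sum, norm_mul, Complex.norm_real, Real.norm_of_nonneg (hβ _)]
        exact sum_congr rfl fun c _ => sum_congr rfl fun d _ => by ring
    _ ≤ ∑ d ∈ F, β d := sum_mul_le_sum_of_threshold hb hlow hhigh ht0 ht1 hsum

theorem iSup_iSup_norm_trace_embedSelector_eq_sum [Fintype ι] [DecidableEq ι]
    {V : Matrix κ κ ℂ} (hV : V ∈ unitaryGroup κ ℂ) {U : Matrix ι ι ℂ} (hU : U ∈ unitaryGroup ι ℂ)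
    {β : ι → ℝ} (hβ : ∀ c, 0 ≤ β c) {F : Finset ι} {b : ℝ} (hb : 0 ≤ b)
    (hlow : ∀ c ∉ F, β c ≤ b) (hhigh : ∀ d ∈ F, b ≤ β d) :
    ⨆ X₁ : unitaryGroup κ ℂ, ⨆ X₂ : unitaryGroup ι ℂ,
      ‖trace ((X₁ : Matrix κ κ ℂ) * (V * embedDiagonal e β * U) * (X₂ : Matrix ι ι ℂ) *
        embedSelector e F)‖ =
      ∑ d ∈ F, β d := by
  refine ciSup₂_eq_of_forall_le_of_eq (fun X₁ X₂ => ?_)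
    (a₀ := ⟨star V, Unitary.star_mem hV⟩)
    (b₀ := (⟨star U, Unitary.star_mem hU⟩ : unitaryGroup ι ℂ)) ?_
  · have h := norm_trace_mul_embedDiagonal_mul_mul_embedSelector_le (e := e) (mul_mem X₁.2 hV)
      (mul_mem hU X₂.2) hβ hb hlow hhigh
    simpa only [Matrix.mul_assoc] using h
  · have hVU : star V * (V * embedDiagonal e β * U) * star U = embedDiagonal e β := by
      rw [← Matrix.mul_assoc, ← Matrix.mul_assoc, mem_unitaryGroup_iff'.1 hV, Matrix.one_mul,
        Matrix.mul_assoc, mem_unitaryGroup_iff.1 hU, Matrix.mul_one]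
    change ‖trace (star V * (V * embedDiagonal e β * U) * star U * embedSelector e F)‖ = _
    rw [hVU, trace_mul_embedSelector]
    simp only [embedDiagonal_apply_self]
    rw [← Complex.ofReal_sum, Complex.norm_real, Real.norm_of_nonneg (sum_nonneg fun d _ => hβ d)]

end Embedded

section BottomBlock

variable {p n : ℕ}

def bottomEmbedding (hnp : n ≤ p) : Fin n ↪ Fin p where
  toFun l := ⟨p - n + l, by omega⟩
  inj' a b h := Fin.ext (by simpa using h)

@[simp]
theorem bottomEmbedding_apply_val (hnp : n ≤ p) (l : Fin n) :
    (bottomEmbedding hnp l : ℕ) = p - n + l :=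
  rfl

theorem of_eq_embedDiagonal (hnp : n ≤ p) (β : Fin n → ℝ) :
    (of fun (k : Fin p) (l : Fin n) => if (k : ℕ) + n = p + l then (β l : ℂ) else 0) =
      embedDiagonal (bottomEmbedding hnp) β := by
  ext k l
  simp only [embedDiagonal, of_apply, Fin.ext_iff, bottomEmbedding_apply_val]
  congr 1
  exact propext (by omega)

theorem of_eq_embedSelector (hnp : n ≤ p) (P : Fin n → Prop) [DecidablePred P]
    (F : Finset (Fin n)) (hP : ∀ k, P k ↔ k ∈ F) :
    (of fun (k : Fin n) (l : Fin p) => if (l : ℕ) + n = p + k ∧ P k then (1 : ℂ) else 0) =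
      embedSelector (bottomEmbedding hnp) F := by
  ext k l
  simp only [embedSelector, of_apply, Fin.ext_iff, bottomEmbedding_apply_val, ← hP]
  congr 1
  exact propext (and_congr_left fun _ => by omega)

end BottomBlock

end GSVD

open GSVD

theorem stmt5_general
    {m p n : ℕ} (hnp : n ≤ p)
    (A : Matrix (Fin m) (Fin n) ℂ) (B : Matrix (Fin p) (Fin n) ℂ)
    (V : Matrix (Fin p) (Fin p) ℂ) (hV : V ∈ Matrix.unitaryGroup (Fin p) ℂ)
    (R : Matrix (Fin n) (Fin n) ℂ)
    (β : Fin n → ℝ)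
    (hβ0 : ∀ k, 0 ≤ β k) (hmono : Monotone β)
    (hB : B = V * (Matrix.of fun (k : Fin p) (l : Fin n) =>
        if (k : ℕ) + n = p + (l : ℕ) then Complex.ofReal (β l) else 0) * R)
    (hAA : Aᴴ * A = Rᴴ * Matrix.diagonal (fun l => Complex.ofReal (1 - β l ^ 2)) * R)
    (S : Matrix (Fin n) (Fin n) ℂ) (hS : S.PosDef)
    (hSsq : S * S = Aᴴ * A + Bᴴ * B)
    (i : Fin n) :
    β i =
(⨆ X1 : Matrix.unitaryGroup (Fin p) ℂ, ⨆ X2 : Matrix.unitaryGroup (Fin n) ℂ,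
      ‖(Matrix.trace ((X1 : Matrix (Fin p) (Fin p) ℂ) * B * S⁻¹ *
        (X2 : Matrix (Fin n) (Fin n) ℂ) *
        Matrix.of (fun (k : Fin n) (l : Fin p) =>
          if (l : ℕ) + n = p + (k : ℕ) ∧ (i : ℕ) ≤ (k : ℕ) then (1 : ℂ) else 0)))‖) -
(⨆ X1 : Matrix.unitaryGroup (Fin p) ℂ, ⨆ X2 : Matrix.unitaryGroup (Fin n) ℂ,
      ‖(Matrix.trace ((X1 : Matrix (Fin p) (Fin p) ℂ) * B * S⁻¹ *
        (X2 : Matrix (Fin n) (Fin n) ℂ) *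
        Matrix.of (fun (k : Fin n) (l : Fin p) =>
          if (l : ℕ) + n = p + (k : ℕ) ∧ (i : ℕ) + 1 ≤ (k : ℕ) then (1 : ℂ) else 0)))‖) := by
  rw [of_eq_embedDiagonal hnp] at hB
  have hU : R * S⁻¹ ∈ unitaryGroup (Fin n) ℂ :=
    mul_inv_mem_unitaryGroup_of_conjTranspose_mul_self_eq hS.1 hS.isUnit
    (by rw [hSsq, conjTranspose_mul_self_add_eq_of_gsvd hV hB hAA])
  have hsup : ∀ F : Finset (Fin n), (∀ c ∉ F, β c ≤ β i) → (∀ d ∈ F, β i ≤ β d) →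
      ⨆ X₁ : unitaryGroup (Fin p) ℂ, ⨆ X₂ : unitaryGroup (Fin n) ℂ,
        ‖trace ((X₁ : Matrix (Fin p) (Fin p) ℂ) * B * S⁻¹ * (X₂ : Matrix (Fin n) (Fin n) ℂ) *
          embedSelector (bottomEmbedding hnp) F)‖ = ∑ d ∈ F, β d := fun F hlow hhigh => by
    have hBS : B * S⁻¹ = V * embedDiagonal (bottomEmbedding hnp) β * (R * S⁻¹) := by
      rw [hB, Matrix.mul_assoc _ R]
    simp_rw [Matrix.mul_assoc _ B S⁻¹, hBS]
    exact iSup_iSup_norm_trace_embedSelector_eq_sum hV hU hβ0 (hβ0 i) hlow hhigh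
  rw [of_eq_embedSelector hnp (fun k => (i : ℕ) ≤ k) (Ici i)
      fun _ => by rw [mem_Ici, Fin.le_def],
    of_eq_embedSelector hnp (fun k => (i : ℕ) + 1 ≤ k) (Ioi i)
      fun _ => by rw [mem_Ioi, Fin.lt_def]; rfl,
    hsup _ (fun c hc => hmono (le_of_lt (by simpa using hc)))
      (fun d hd => hmono (by simpa using hd)),
    hsup _ (fun c hc => hmono (by simpa using hc))
      (fun d hd => hmono (le_of_lt (by simpa using hd))),
    Ici_eq_cons_Ioi, sum_cons]
  ring

theorem stmt5
    {m p n : ℕ} (hnp : n ≤ p)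
    (A : Matrix (Fin m) (Fin n) ℂ) (B : Matrix (Fin p) (Fin n) ℂ)
    (hrank : (Matrix.fromRows A B).rank = n)
    (V : Matrix (Fin p) (Fin p) ℂ) (hV : V ∈ Matrix.unitaryGroup (Fin p) ℂ)
    (R : Matrix (Fin n) (Fin n) ℂ) (hR : IsUnit R.det)
    (β : Fin n → ℝ)
    (hβ0 : ∀ k, 0 ≤ β k) (hβ1 : ∀ k, β k ≤ 1) (hmono : Monotone β)
    (hB : B = V * (Matrix.of fun (k : Fin p) (l : Fin n) =>
        if (k : ℕ) + n = p + (l : ℕ) then Complex.ofReal (β l) else 0) * R)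
    (hAA : Aᴴ * A = Rᴴ * Matrix.diagonal (fun l => Complex.ofReal (1 - β l ^ 2)) * R)
    (S : Matrix (Fin n) (Fin n) ℂ) (hS : S.PosDef)
    (hSsq : S * S = Aᴴ * A + Bᴴ * B)
    (i : Fin n) :
    β i =
(⨆ X1 : Matrix.unitaryGroup (Fin p) ℂ, ⨆ X2 : Matrix.unitaryGroup (Fin n) ℂ,
      ‖(Matrix.trace ((X1 : Matrix (Fin p) (Fin p) ℂ) * B * S⁻¹ *
        (X2 : Matrix (Fin n) (Fin n) ℂ) *
        Matrix.of (fun (k : Fin n) (l : Fin p) =>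
          if (l : ℕ) + n = p + (k : ℕ) ∧ (i : ℕ) ≤ (k : ℕ) then (1 : ℂ) else 0)))‖) -
(⨆ X1 : Matrix.unitaryGroup (Fin p) ℂ, ⨆ X2 : Matrix.unitaryGroup (Fin n) ℂ,
      ‖(Matrix.trace ((X1 : Matrix (Fin p) (Fin p) ℂ) * B * S⁻¹ *
        (X2 : Matrix (Fin n) (Fin n) ℂ) *
        Matrix.of (fun (k : Fin n) (l : Fin p) =>
          if (l : ℕ) + n = p + (k : ℕ) ∧ (i : ℕ) + 1 ≤ (k : ℕ) then (1 : ℂ) else 0)))‖) :=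
  stmt5_general hnp A B V hV R β hβ0 hmono hB hAA S hS hSsq i
end

section
/- Let m ≤ n and let {A,B} be an (m,p,n)-GMP with GSVD as in the context, with generalized singular values (αᵢ, βᵢ); in particular α_{m+1} = ⋯ = αₙ = 0. Then for every 1 ≤ i ≤ m, αᵢ equals the difference of maxima: αᵢ = max_{Π₃ ∈ 𝕌_n, Π₄ ∈ 𝕌_m} |tr(Π₃ (AᴴA + BᴴB)^{-1/2} Aᴴ Π₄ 𝒮_i)| − max_{Π₃ ∈ 𝕌_n, Π₄ ∈ 𝕌_m} |tr(Π₃ (AᴴA + BᴴB)^{-1/2} Aᴴ Π₄ 𝒮_{i-1})|. -/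
/-!
Write `A = U Σ R` and `M = AᴴA + BᴴB = RᴴR`. Then `Q = M^{-1/2} Rᴴ` is unitary and
`M^{-1/2} Aᴴ = Q Σᴴ Uᴴ`, so the `t`-th maximum is the maximum of `|tr(V Σᴴ W 𝒮_t)|` over unitary
`V`, `W`. This trace equals `∑_k α_k ∑_{a<t} W_{ka} V_{ak}`; by AM–GM the inner sums are bounded
by weights `c_k ∈ [0, 1]` with `∑ c_k ≤ t`, because rows and columns of a unitary matrix are unit
vectors. As `α` is nonincreasing, `∑ α_k c_k ≤ α_1 + ⋯ + α_t`, with equality at `V = W = 1`.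
So the `t`-th maximum is `α_1 + ⋯ + α_t`, and consecutive differences give `α_i`.
-/

open Matrix Finset
open scoped ComplexOrder

namespace GSVD

section Unitary

variable {𝕜 ι : Type*} [RCLike 𝕜] [Fintype ι] [DecidableEq ι] {V : Matrix ι ι 𝕜}

theorem sum_norm_sq_row_eq_one_s6 (hV : V ∈ unitaryGroup ι 𝕜) (i : ι) : ∑ j, ‖V i j‖ ^ 2 = 1 := by
  have h : (V * star V) i i = 1 := by rw [Unitary.mul_star_self_of_mem hV, one_apply_eq]
  simp only [Matrix.mul_apply, star_apply, RCLike.star_def, RCLike.mul_conj] at h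
  exact_mod_cast h

theorem sum_norm_sq_row_le_one_s6 (hV : V ∈ unitaryGroup ι 𝕜) (i : ι) (s : Finset ι) :
    ∑ j ∈ s, ‖V i j‖ ^ 2 ≤ 1 :=
  sum_norm_sq_row_eq_one_s6 hV i ▸ sum_le_univ_sum_of_nonneg fun _ => sq_nonneg _

theorem sum_norm_sq_col_le_one_s6 (hV : V ∈ unitaryGroup ι 𝕜) (j : ι) (s : Finset ι) :
    ∑ i ∈ s, ‖V i j‖ ^ 2 ≤ 1 := by
  simpa [star_apply] using sum_norm_sq_row_le_one_s6 (Unitary.star_mem hV) j s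

end Unitary

theorem sum_mul_le_sum_filter_lt_of_antitone {m t : ℕ} {a c : Fin m → ℝ} (ha0 : ∀ k, 0 ≤ a k)
    (ha : Antitone a) (hc0 : ∀ k, 0 ≤ c k) (hc1 : ∀ k, c k ≤ 1)
    (hcs : ∑ k, c k ≤ #{k : Fin m | k.val < t}) :
    ∑ k, a k * c k ≤ ∑ k : Fin m with k.val < t, a k := by
  -- `θ` lies between the first `t` values of `a` and the rest, so termwise
  -- `(a k - θ) * (c k - [k < t]) ≤ 0`; summing leaves `θ * (∑ c - #{k < t}) ≤ 0`.
  set θ : ℝ := if h : t < m then a ⟨t, h⟩ else 0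
  have hθ0 : 0 ≤ θ := by unfold θ; split_ifs; exacts [ha0 _, le_rfl]
  have hθ : ∀ k : Fin m, a k * c k - (if k.val < t then a k else 0) ≤
      θ * (c k - if k.val < t then 1 else 0) := by
    intro k
    by_cases hk : k.val < t
    · have : θ ≤ a k := by
        unfold θ; split_ifs with h
        · exact ha (Fin.mk_le_of_le_val hk.le)
        · exact ha0 k
      simp only [if_pos hk]; nlinarith [hc1 k]
    · have hkt : t < m := by omega
      have : a k ≤ θ := by
        simp only [θ, dif_pos hkt]; exact ha (Fin.mk_le_of_le_val (by omega))
      simp only [if_neg hk]; nlinarith [hc0 k]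
  have hsum := sum_le_sum fun k (_ : k ∈ univ) => hθ k
  rw [sum_sub_distrib, ← mul_sum, sum_sub_distrib, ← sum_filter, sum_boole] at hsum
  nlinarith

theorem ciSup_ciSup_eq_of_forall_le_of_eq {ι κ β : Type*} [Nonempty ι] [Nonempty κ]
    [ConditionallyCompleteLattice β] {f : ι → κ → β} {v : β} (hle : ∀ i j, f i j ≤ v) (i₀ : ι)
    (j₀ : κ) (h₀ : f i₀ j₀ = v) :
    ⨆ i, ⨆ j, f i j = v := by
  refine le_antisymm (ciSup_le fun i => ciSup_le (hle i)) ?_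
  rw [← h₀]
  exact le_ciSup_of_le ⟨v, Set.forall_mem_range.2 fun i => ciSup_le (hle i)⟩ i₀
    (le_ciSup ⟨v, Set.forall_mem_range.2 (hle i₀)⟩ j₀)

theorem sum_filter_val_lt_succ {M : Type*} [AddCommMonoid M] {m : ℕ} (f : Fin m → M) (i : Fin m) :
    ∑ k : Fin m with k.val < i.val + 1, f k = f i + ∑ k : Fin m with k.val < i.val, f k := by
  rw [← sum_insert (by simp)]
  congr 1
  ext k
  simp only [mem_filter, mem_univ, true_and, mem_insert, Fin.ext_iff]
  omega

theorem inv_mul_conjTranspose_mem_unitaryGroup {𝕜 ι : Type*} [Field 𝕜] [StarRing 𝕜] [Fintype ι]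
    [DecidableEq ι] {S R : Matrix ι ι 𝕜} (hS : S.IsHermitian) (hSdet : IsUnit S.det)
    (h : S * S = Rᴴ * R) : S⁻¹ * Rᴴ ∈ unitaryGroup ι 𝕜 := by
  rw [mem_unitaryGroup_iff, star_eq_conjTranspose, conjTranspose_mul, conjTranspose_conjTranspose,
    conjTranspose_nonsing_inv, hS.eq]
  calc S⁻¹ * Rᴴ * (R * S⁻¹) = S⁻¹ * (S * S) * S⁻¹ := by simp only [h, Matrix.mul_assoc]
    _ = 1 := by
      rw [Matrix.mul_assoc, Matrix.mul_assoc, mul_nonsing_inv _ hSdet, Matrix.mul_one,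
        nonsing_inv_mul _ hSdet]

/-- The `m × n` matrix with diagonal `d`; entries of `d` at indices `≥ m` are dropped. -/
def rectDiag (m : ℕ) {n : ℕ} (d : Fin n → ℂ) : Matrix (Fin m) (Fin n) ℂ :=
  of fun k l => if (k : ℕ) = l then d l else 0

variable {m n : ℕ}

theorem rectDiag_apply (hmn : m ≤ n) (d : Fin n → ℂ) (k : Fin m) (l : Fin n) :
    rectDiag m d k l = if l = Fin.castLE hmn k then d l else 0 := by
  simp [rectDiag, Fin.ext_iff, eq_comm]

theorem of_eq_rectDiag (t : ℕ) :
    (of fun (k : Fin m) (l : Fin n) => if (k : ℕ) = l ∧ (k : ℕ) < t then (1 : ℂ) else 0) =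
      rectDiag m fun l => if l.val < t then 1 else 0 := by
  refine Matrix.ext fun k l => ?_
  simp only [rectDiag, of_apply]
  split_ifs <;> first | rfl | omega

theorem conjTranspose_rectDiag_mul_rectDiag (d : Fin n → ℂ)
    (hd : ∀ l : Fin n, m ≤ l.val → d l = 0) :
    (rectDiag m d)ᴴ * rectDiag m d = diagonal fun l => star (d l) * d l := by
  refine Matrix.ext fun l l' => ?_
  rw [Matrix.mul_apply, diagonal_apply]
  split_ifs with h
  · subst h
    by_cases hl : l.val < m
    · rw [sum_eq_single ⟨l, hl⟩] <;> simp +contextual [rectDiag, Fin.ext_iff]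
    · simp [hd l (by omega), rectDiag]
  · refine sum_eq_zero fun k _ => ?_
    simp only [rectDiag, conjTranspose_apply, of_apply]
    split_ifs <;> simp_all [Fin.ext_iff]

theorem trace_mul_rectDiag (hmn : m ≤ n) (V : Matrix (Fin n) (Fin n) ℂ)
    (W : Matrix (Fin m) (Fin m) ℂ) (d d' : Fin n → ℂ) :
    trace (V * (rectDiag m d)ᴴ * W * rectDiag m d') =
      ∑ k, ∑ a, V (Fin.castLE hmn a) (Fin.castLE hmn k) * star (d (Fin.castLE hmn k)) * W k a *
        d' (Fin.castLE hmn a) := by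
  simp only [trace, Matrix.diag, Matrix.mul_apply, conjTranspose_apply, rectDiag_apply hmn,
    sum_mul]
  rw [sum_comm]
  conv_rhs => rw [sum_comm]
  refine sum_congr rfl fun a _ => ?_
  simp [apply_ite (starRingEnd ℂ), ite_mul, mul_ite]

theorem trace_conjTranspose_rectDiag_mul_rectDiag (hmn : m ≤ n) (α : Fin n → ℝ) (t : ℕ) :
    trace ((rectDiag m fun l => (α l : ℂ))ᴴ * rectDiag m fun l => if l.val < t then 1 else 0) =
      ∑ k : Fin m with k.val < t, (α (Fin.castLE hmn k) : ℂ) := by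
  have h := trace_mul_rectDiag hmn 1 1 (fun l => (α l : ℂ)) fun l => if l.val < t then 1 else 0
  rw [Matrix.one_mul, Matrix.mul_one] at h
  rw [h, sum_filter]
  refine sum_congr rfl fun k _ => ?_
  rw [Fintype.sum_eq_single k fun a ha => by simp [Ne.symm ha]]
  simp

/-- AM–GM bounds the leading partial diagonal sums by substochastic weights. -/
theorem exists_weights_of_mem_unitaryGroup (hmn : m ≤ n) {V : Matrix (Fin n) (Fin n) ℂ}
    {W : Matrix (Fin m) (Fin m) ℂ} (hV : V ∈ unitaryGroup (Fin n) ℂ)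
    (hW : W ∈ unitaryGroup (Fin m) ℂ) (F : Finset (Fin m)) :
    ∃ c : Fin m → ℝ, (∀ k, 0 ≤ c k) ∧ (∀ k, c k ≤ 1) ∧ ∑ k, c k ≤ #F ∧
      ∀ k, ‖∑ a ∈ F, W k a * V (Fin.castLE hmn a) (Fin.castLE hmn k)‖ ≤ c k := by
  set e := Fin.castLE hmn
  have hcol : ∀ k, ∑ a ∈ F, ‖V (e a) (e k)‖ ^ 2 ≤ 1 := fun k => by
    simpa using sum_norm_sq_col_le_one_s6 hV (e k) (F.map (Fin.castLEEmb hmn))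
  have hrow : ∀ a, ∑ k, ‖V (e a) (e k)‖ ^ 2 ≤ 1 := fun a => by
    simpa using sum_norm_sq_row_le_one_s6 hV (e a) (univ.map (Fin.castLEEmb hmn))
  refine ⟨fun k => (∑ a ∈ F, ‖W k a‖ ^ 2 + ∑ a ∈ F, ‖V (e a) (e k)‖ ^ 2) / 2,
    fun k => by positivity, fun k => ?_, ?_, fun k => ?_⟩
  · linarith [sum_norm_sq_row_le_one_s6 hW k F, hcol k]
  · have h : ∀ a ∈ F, ∑ k, ‖W k a‖ ^ 2 + ∑ k, ‖V (e a) (e k)‖ ^ 2 ≤ 2 := fun a _ => by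
      linarith [sum_norm_sq_col_le_one_s6 hW a univ, hrow a]
    have := sum_le_card_nsmul F _ 2 h
    simp only [← sum_div, sum_add_distrib, nsmul_eq_mul] at this ⊢
    rw [sum_comm, sum_comm (s := univ)]
    linarith
  · simp only [add_div, sum_div, ← sum_add_distrib]
    refine (norm_sum_le _ _).trans (sum_le_sum fun a _ => ?_)
    rw [norm_mul]
    nlinarith [sq_nonneg (‖W k a‖ - ‖V (e a) (e k)‖)]

theorem norm_trace_mul_rectDiag_le (hmn : m ≤ n) {V : Matrix (Fin n) (Fin n) ℂ}
    {W : Matrix (Fin m) (Fin m) ℂ} (hV : V ∈ unitaryGroup (Fin n) ℂ)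
    (hW : W ∈ unitaryGroup (Fin m) ℂ) {α : Fin n → ℝ} (hα0 : ∀ l, 0 ≤ α l) (hα : Antitone α)
    (t : ℕ) :
    ‖trace (V * (rectDiag m fun l => (α l : ℂ))ᴴ * W *
        rectDiag m fun l => if l.val < t then 1 else 0)‖ ≤
      ∑ k : Fin m with k.val < t, α (Fin.castLE hmn k) := by
  set e := Fin.castLE hmn
  set F : Finset (Fin m) := {a | a.val < t}
  obtain ⟨c, hc0, hc1, hcs, hc⟩ := exists_weights_of_mem_unitaryGroup hmn hV hW F
  have htrace : trace (V * (rectDiag m fun l => (α l : ℂ))ᴴ * W *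
      rectDiag m fun l => if l.val < t then 1 else 0) =
      ∑ k, (α (e k) : ℂ) * ∑ a ∈ F, W k a * V (e a) (e k) := by
    rw [trace_mul_rectDiag hmn]
    refine sum_congr rfl fun k _ => ?_
    simp only [mul_sum, sum_filter, F]
    refine sum_congr rfl fun a _ => ?_
    simp only [e, Fin.val_castLE, Complex.star_def, Complex.conj_ofReal]
    split_ifs <;> ring
  calc _ ≤ ∑ k, α (e k) * c k := by
        rw [htrace]
        refine (norm_sum_le _ _).trans (sum_le_sum fun k _ => ?_)
        rw [norm_mul, Complex.norm_real, Real.norm_of_nonneg (hα0 _)]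
        exact mul_le_mul_of_nonneg_left (hc k) (hα0 _)
    _ ≤ _ := sum_mul_le_sum_filter_lt_of_antitone (fun k => hα0 _)
          (hα.comp_monotone (Fin.strictMono_castLE hmn).monotone) hc0 hc1 hcs

theorem iSup_iSup_norm_trace_eq (hmn : m ≤ n) {Q : Matrix (Fin n) (Fin n) ℂ}
    {V : Matrix (Fin m) (Fin m) ℂ} (hQ : Q ∈ unitaryGroup (Fin n) ℂ)
    (hV : V ∈ unitaryGroup (Fin m) ℂ) {α : Fin n → ℝ} (hα0 : ∀ l, 0 ≤ α l) (hα : Antitone α)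
    (t : ℕ) :
    ⨆ W₁ : unitaryGroup (Fin n) ℂ, ⨆ W₂ : unitaryGroup (Fin m) ℂ,
      ‖trace ((W₁ : Matrix (Fin n) (Fin n) ℂ) * (Q * (rectDiag m fun l => (α l : ℂ))ᴴ * V) *
        (W₂ : Matrix (Fin m) (Fin m) ℂ) * rectDiag m fun l => if l.val < t then 1 else 0)‖ =
      ∑ k : Fin m with k.val < t, α (Fin.castLE hmn k) := by
  refine ciSup_ciSup_eq_of_forall_le_of_eq (fun W₁ W₂ => ?_) ⟨star Q, Unitary.star_mem hQ⟩
    ⟨star V, Unitary.star_mem hV⟩ ?_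
  · simpa only [Matrix.mul_assoc] using
      norm_trace_mul_rectDiag_le hmn (mul_mem W₁.2 hQ) (mul_mem hV W₂.2) hα0 hα t
  · have hQ' : star Q * Q = 1 := Unitary.star_mul_self_of_mem hQ
    have hV' : V * star V = 1 := Unitary.mul_star_self_of_mem hV
    simp only [Matrix.mul_assoc, ← Matrix.mul_assoc (star Q), hQ', hV', Matrix.one_mul,
      Matrix.mul_one]
    rw [trace_conjTranspose_rectDiag_mul_rectDiag hmn, ← Complex.ofReal_sum, Complex.norm_real,
      Real.norm_of_nonneg (sum_nonneg fun k _ => hα0 _)]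

theorem conjTranspose_mul_self_add_conjTranspose_mul_self {p : ℕ} {A : Matrix (Fin m) (Fin n) ℂ}
    {B : Matrix (Fin p) (Fin n) ℂ} {U : Matrix (Fin m) (Fin m) ℂ} {R : Matrix (Fin n) (Fin n) ℂ}
    {α : Fin n → ℝ} (hU : U ∈ unitaryGroup (Fin m) ℂ) (hzero : ∀ l : Fin n, m ≤ l.val → α l = 0)
    (hA : A = U * rectDiag m (fun l => (α l : ℂ)) * R)
    (hBB : Bᴴ * B = Rᴴ * diagonal (fun l => ((1 - α l ^ 2 : ℝ) : ℂ)) * R) :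
    Aᴴ * A + Bᴴ * B = Rᴴ * R := by
  have hAA : Aᴴ * A = Rᴴ * diagonal (fun l => (α l : ℂ) ^ 2) * R := by
    rw [hA, conjTranspose_mul, conjTranspose_mul, ← star_eq_conjTranspose U]
    calc _ = Rᴴ * ((rectDiag m fun l => (α l : ℂ))ᴴ * (star U * U) *
          rectDiag m fun l => (α l : ℂ)) * R := by simp only [Matrix.mul_assoc]
      _ = _ := by
        rw [Unitary.star_mul_self_of_mem hU, Matrix.mul_one,
          conjTranspose_rectDiag_mul_rectDiag _ fun l hl => by simp [hzero l hl]]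
        simp [sq, Complex.conj_ofReal]
  have hdiag : diagonal (fun l => (α l : ℂ) ^ 2) +
      diagonal (fun l => ((1 - α l ^ 2 : ℝ) : ℂ)) = 1 := by
    rw [diagonal_add, ← diagonal_one]
    congr 1
    ext l
    push_cast
    ring
  rw [hAA, hBB, ← Matrix.add_mul, ← Matrix.mul_add, hdiag, Matrix.mul_one]

end GSVD

open GSVD

theorem stmt6_general
    {m p n : ℕ} (hmn : m ≤ n)
    (A : Matrix (Fin m) (Fin n) ℂ) (B : Matrix (Fin p) (Fin n) ℂ)
    (U : Matrix (Fin m) (Fin m) ℂ) (hU : U ∈ Matrix.unitaryGroup (Fin m) ℂ)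
    (R : Matrix (Fin n) (Fin n) ℂ)
    (α : Fin n → ℝ)
    (hα0 : ∀ k, 0 ≤ α k) (hmono : Antitone α)
    (hzero : ∀ k : Fin n, m ≤ (k : ℕ) → α k = 0)
    (hA : A = U * (Matrix.of fun (k : Fin m) (l : Fin n) =>
        if (k : ℕ) = (l : ℕ) then Complex.ofReal (α l) else 0) * R)
    (hBB : Bᴴ * B = Rᴴ * Matrix.diagonal (fun l => Complex.ofReal (1 - α l ^ 2)) * R)
    (S : Matrix (Fin n) (Fin n) ℂ) (hS : S.PosDef)
    (hSsq : S * S = Aᴴ * A + Bᴴ * B)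
    (i : Fin n) (him : (i : ℕ) < m) :
    α i =
(⨆ W3 : Matrix.unitaryGroup (Fin n) ℂ, ⨆ W4 : Matrix.unitaryGroup (Fin m) ℂ,
      ‖(Matrix.trace ((W3 : Matrix (Fin n) (Fin n) ℂ) * S⁻¹ * Aᴴ *
        (W4 : Matrix (Fin m) (Fin m) ℂ) *
        Matrix.of (fun (k : Fin m) (l : Fin n) =>
          if (k : ℕ) = (l : ℕ) ∧ (k : ℕ) ≤ (i : ℕ) then (1 : ℂ) else 0)))‖) -
(⨆ W3 : Matrix.unitaryGroup (Fin n) ℂ, ⨆ W4 : Matrix.unitaryGroup (Fin m) ℂ,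
      ‖(Matrix.trace ((W3 : Matrix (Fin n) (Fin n) ℂ) * S⁻¹ * Aᴴ *
        (W4 : Matrix (Fin m) (Fin m) ℂ) *
        Matrix.of (fun (k : Fin m) (l : Fin n) =>
          if (k : ℕ) = (l : ℕ) ∧ (k : ℕ) < (i : ℕ) then (1 : ℂ) else 0)))‖) := by
  change A = U * rectDiag m (fun l => (α l : ℂ)) * R at hA
  have hQ : S⁻¹ * Rᴴ ∈ unitaryGroup (Fin n) ℂ :=
    inv_mul_conjTranspose_mem_unitaryGroup hS.isHermitian
      ((isUnit_iff_isUnit_det S).1 hS.isUnit) <| by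
      rw [hSsq, conjTranspose_mul_self_add_conjTranspose_mul_self hU hzero hA hBB]
  have hSA : S⁻¹ * Aᴴ = S⁻¹ * Rᴴ * (rectDiag m fun l => (α l : ℂ))ᴴ * star U := by
    simp only [hA, conjTranspose_mul, star_eq_conjTranspose, Matrix.mul_assoc]
  have hsup (t : ℕ) := iSup_iSup_norm_trace_eq hmn hQ (Unitary.star_mem hU) hα0 hmono t
  simp only [← hSA, ← Matrix.mul_assoc] at hsup
  simp only [← Nat.lt_add_one_iff (n := (i : ℕ)), of_eq_rectDiag, hsup]
  rw [sum_filter_val_lt_succ _ ⟨i, him⟩]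
  simp

theorem stmt6
    {m p n : ℕ} (hmn : m ≤ n)
    (A : Matrix (Fin m) (Fin n) ℂ) (B : Matrix (Fin p) (Fin n) ℂ)
    (hrank : (Matrix.fromRows A B).rank = n)
    (U : Matrix (Fin m) (Fin m) ℂ) (hU : U ∈ Matrix.unitaryGroup (Fin m) ℂ)
    (R : Matrix (Fin n) (Fin n) ℂ) (hR : IsUnit R.det)
    (α : Fin n → ℝ)
    (hα0 : ∀ k, 0 ≤ α k) (hα1 : ∀ k, α k ≤ 1) (hmono : Antitone α)
    (hzero : ∀ k : Fin n, m ≤ (k : ℕ) → α k = 0)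
    (hA : A = U * (Matrix.of fun (k : Fin m) (l : Fin n) =>
        if (k : ℕ) = (l : ℕ) then Complex.ofReal (α l) else 0) * R)
    (hBB : Bᴴ * B = Rᴴ * Matrix.diagonal (fun l => Complex.ofReal (1 - α l ^ 2)) * R)
    (S : Matrix (Fin n) (Fin n) ℂ) (hS : S.PosDef)
    (hSsq : S * S = Aᴴ * A + Bᴴ * B)
    (i : Fin n) (him : (i : ℕ) < m) :
    α i =
(⨆ W3 : Matrix.unitaryGroup (Fin n) ℂ, ⨆ W4 : Matrix.unitaryGroup (Fin m) ℂ,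
      ‖(Matrix.trace ((W3 : Matrix (Fin n) (Fin n) ℂ) * S⁻¹ * Aᴴ *
        (W4 : Matrix (Fin m) (Fin m) ℂ) *
        Matrix.of (fun (k : Fin m) (l : Fin n) =>
          if (k : ℕ) = (l : ℕ) ∧ (k : ℕ) ≤ (i : ℕ) then (1 : ℂ) else 0)))‖) -
(⨆ W3 : Matrix.unitaryGroup (Fin n) ℂ, ⨆ W4 : Matrix.unitaryGroup (Fin m) ℂ,
      ‖(Matrix.trace ((W3 : Matrix (Fin n) (Fin n) ℂ) * S⁻¹ * Aᴴ *
        (W4 : Matrix (Fin m) (Fin m) ℂ) *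
        Matrix.of (fun (k : Fin m) (l : Fin n) =>
          if (k : ℕ) = (l : ℕ) ∧ (k : ℕ) < (i : ℕ) then (1 : ℂ) else 0)))‖) :=
  stmt6_general hmn A B U hU R α hα0 hmono hzero hA hBB S hS hSsq i him
end

section
/- Let n ≤ m and let {A,B} be an (m,p,n)-GMP with GSVD as in the context, with generalized singular values (αᵢ, βᵢ). Then for every 1 ≤ i ≤ n, max_{Φ ∈ 𝕌_m} Re tr(Aᴴ Φᴴ Q_i Φ A (AᴴA + BᴴB)^{-1}) = α₁² + α₂² + ⋯ + αᵢ². -/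
/-!
Write `A = U Σ R` with `AᴴA + BᴴB = RᴴR`. Conjugating by `R` leaves the trace unchanged, so the
objective at `Φ` is `Re tr(Σᴴ Ψᴴ Q Ψ Σ) = ∑ₗ αₗ² wₗ` with `Ψ = Φ U` unitary and
`wₗ = ∑_{j ≤ i} |Ψ j l|²`. Orthonormality of the rows and columns of `Ψ` gives `0 ≤ wₗ ≤ 1` and
`∑ₗ wₗ ≤ i + 1`; for the decreasing weights `αₗ²` such a sum is largest when `w` is the indicator
of `{l ≤ i}`, which is attained at `Φ = Uᴴ`.
-/

open Matrix Finset

theorem sum_mul_le_sum_Iic_of_antitone {ι : Type*} [Fintype ι] [LinearOrder ι]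
    [LocallyFiniteOrderBot ι] {a c : ι → ℝ} (i : ι) (ha : Antitone a) (hai : 0 ≤ a i)
    (hc0 : ∀ k, 0 ≤ c k) (hc1 : ∀ k, c k ≤ 1) (hsum : ∑ k, c k ≤ #(Iic i)) :
    ∑ k, a k * c k ≤ ∑ k ∈ Iic i, a k := by
  have hterm (k : ι) : a k * c k ≤ a i * c k + (if k ∈ Iic i then a k - a i else 0) := by
    by_cases hk : k ≤ i
    · simp only [mem_Iic, hk, if_true]
      nlinarith [ha hk, hc1 k]
    · simp only [mem_Iic, hk, if_false]
      nlinarith [ha (le_of_not_ge hk), hc0 k]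
  calc ∑ k, a k * c k ≤ ∑ k, (a i * c k + if k ∈ Iic i then a k - a i else 0) :=
        sum_le_sum fun k _ ↦ hterm k
    _ = a i * (∑ k, c k - #(Iic i)) + ∑ k ∈ Iic i, a k := by
        rw [sum_add_distrib, sum_ite_mem, univ_inter, sum_sub_distrib, sum_const, nsmul_eq_mul,
          ← mul_sum]
        ring
    _ ≤ ∑ k ∈ Iic i, a k := by nlinarith

namespace Matrix

theorem conjTranspose_mul_diagonal_mul_apply_self {ι κ : Type*} [Fintype ι] [DecidableEq ι]
    (Ψ : Matrix ι κ ℂ) (q : ι → ℝ) (c : κ) :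
    (Ψᴴ * diagonal (fun j ↦ (q j : ℂ)) * Ψ) c c = ∑ j, q j * Complex.normSq (Ψ j c) := by
  rw [mul_apply]
  simp only [mul_diagonal, conjTranspose_apply, RCLike.star_def, Complex.ofReal_sum,
    Complex.ofReal_mul, Complex.normSq_eq_conj_mul_self]
  exact sum_congr rfl fun j _ ↦ by ring

/-- The matrix `Σ_A` of the GSVD: `diagonal d` stacked on top of a zero block. -/
def rectDiagonal {K : Type*} [Zero K] (m : ℕ) {n : ℕ} (d : Fin n → K) :
    Matrix (Fin m) (Fin n) K :=
  of fun k l ↦ if (k : ℕ) = l then d l else 0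

section RectDiagonal

variable {K : Type*} {m n : ℕ}

theorem rectDiagonal_apply [Zero K] (hnm : n ≤ m) (d : Fin n → K) (k : Fin m) (l : Fin n) :
    rectDiagonal m d k l = if k = Fin.castLE hnm l then d l else 0 := by
  simp [rectDiagonal, Fin.ext_iff]

theorem conjTranspose_rectDiagonal_mul_mul_apply [CommRing K] [StarRing K] (hnm : n ≤ m)
    (d : Fin n → K) (G : Matrix (Fin m) (Fin m) K) (l l' : Fin n) :
    ((rectDiagonal m d)ᴴ * G * rectDiagonal m d) l l' =
      star (d l) * G (Fin.castLE hnm l) (Fin.castLE hnm l') * d l' := by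
  simp [mul_apply, rectDiagonal_apply hnm, apply_ite star, ite_mul]

theorem conjTranspose_rectDiagonal_mul_self [CommRing K] [StarRing K] (hnm : n ≤ m)
    (d : Fin n → K) :
    (rectDiagonal m d)ᴴ * rectDiagonal m d = diagonal fun l ↦ star (d l) * d l := by
  ext l l'
  have h := conjTranspose_rectDiagonal_mul_mul_apply hnm d 1 l l'
  rw [Matrix.mul_one] at h
  rw [h, diagonal_apply]
  by_cases hll' : l = l' <;> simp [one_apply, hll', (Fin.castLE_injective hnm).eq_iff]

theorem trace_conjTranspose_rectDiagonal_mul_mul [CommRing K] [StarRing K] (hnm : n ≤ m)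
    (d : Fin n → K) (G : Matrix (Fin m) (Fin m) K) :
    trace ((rectDiagonal m d)ᴴ * G * rectDiagonal m d) =
      ∑ l, star (d l) * d l * G (Fin.castLE hnm l) (Fin.castLE hnm l) := by
  simp only [trace, diag, conjTranspose_rectDiagonal_mul_mul_apply hnm]
  exact sum_congr rfl fun l _ ↦ by ring

theorem re_trace_rectDiagonal_conj_diagonal (hnm : n ≤ m) (α : Fin n → ℝ) (q : Fin m → ℝ)
    (Ψ : Matrix (Fin m) (Fin m) ℂ) :
    (trace ((rectDiagonal m fun l ↦ (α l : ℂ))ᴴ * (Ψᴴ * diagonal (fun j ↦ (q j : ℂ)) * Ψ) *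
        rectDiagonal m fun l ↦ (α l : ℂ))).re =
      ∑ l, α l ^ 2 * ∑ j, q j * Complex.normSq (Ψ j (Fin.castLE hnm l)) := by
  rw [trace_conjTranspose_rectDiagonal_mul_mul hnm, Complex.re_sum]
  refine sum_congr rfl fun l _ ↦ ?_
  rw [conjTranspose_mul_diagonal_mul_apply_self]
  simp [← Complex.ofReal_mul, sq]

end RectDiagonal

theorem trace_conjTranspose_mul_mul_mul_inv_gram {K p : Type*} [Field K] [StarRing K]
    [Fintype p] [DecidableEq p] {n : ℕ} (S : Matrix p (Fin n) K) {R : Matrix (Fin n) (Fin n) K}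
    (hR : IsUnit R.det) (X : Matrix p p K) :
    trace ((S * R)ᴴ * X * (S * R) * (Rᴴ * R)⁻¹) = trace (Sᴴ * X * S) := by
  have hRH : IsUnit Rᴴ.det := by rw [det_conjTranspose]; exact hR.star
  rw [mul_inv_rev, conjTranspose_mul]
  calc trace (Rᴴ * Sᴴ * X * (S * R) * (R⁻¹ * Rᴴ⁻¹))
      = trace (Rᴴ * (Sᴴ * X * S) * (R * R⁻¹) * Rᴴ⁻¹) := by simp only [Matrix.mul_assoc]
    _ = trace (Rᴴ⁻¹ * Rᴴ * (Sᴴ * X * S)) := by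
        rw [mul_nonsing_inv _ hR, Matrix.mul_one, trace_mul_cycle]
    _ = trace (Sᴴ * X * S) := by rw [nonsing_inv_mul _ hRH, Matrix.one_mul]

section UnitaryGroup

variable {ι : Type*} [Fintype ι] [DecidableEq ι] {Ψ : Matrix ι ι ℂ}

theorem sum_normSq_col_of_mem_unitaryGroup_s8 (hΨ : Ψ ∈ unitaryGroup ι ℂ) (c : ι) :
    ∑ j, Complex.normSq (Ψ j c) = 1 := by
  have h := congrFun (congrFun (mem_unitaryGroup_iff'.mp hΨ) c) c
  simp only [mul_apply, one_apply_eq, star_apply, Complex.star_def,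
    ← Complex.normSq_eq_conj_mul_self] at h
  exact_mod_cast h

theorem sum_normSq_row_of_mem_unitaryGroup_s8 (hΨ : Ψ ∈ unitaryGroup ι ℂ) (j : ι) :
    ∑ c, Complex.normSq (Ψ j c) = 1 := by
  simpa using sum_normSq_col_of_mem_unitaryGroup_s8 (Unitary.star_mem hΨ) j

end UnitaryGroup

end Matrix

theorem conjTranspose_mul_self_add_eq_of_gsvd {m n p : ℕ} (hnm : n ≤ m)
    {A : Matrix (Fin m) (Fin n) ℂ} {B : Matrix (Fin p) (Fin n) ℂ} {U : Matrix (Fin m) (Fin m) ℂ}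
    {R : Matrix (Fin n) (Fin n) ℂ} {α : Fin n → ℝ} (hU : U ∈ unitaryGroup (Fin m) ℂ)
    (hA : A = U * rectDiagonal m (fun l ↦ (α l : ℂ)) * R)
    (hBB : Bᴴ * B = Rᴴ * diagonal (fun l ↦ ((1 - α l ^ 2 : ℝ) : ℂ)) * R) :
    Aᴴ * A + Bᴴ * B = Rᴴ * R := by
  have hUU : Uᴴ * U = 1 := mem_unitaryGroup_iff'.mp hU
  calc Aᴴ * A + Bᴴ * B
      = Rᴴ * ((rectDiagonal m fun l ↦ (α l : ℂ))ᴴ * rectDiagonal m (fun l ↦ (α l : ℂ)) +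
          diagonal (fun l ↦ ((1 - α l ^ 2 : ℝ) : ℂ))) * R := by
        rw [hA, hBB]
        simp only [conjTranspose_mul, Matrix.mul_assoc, Matrix.mul_add, Matrix.add_mul]
        rw [← Matrix.mul_assoc Uᴴ U, hUU, Matrix.one_mul]
    _ = Rᴴ * R := by
        have hsum : (fun l ↦ star (α l : ℂ) * α l + ((1 - α l ^ 2 : ℝ) : ℂ)) = fun _ ↦ 1 := by
          ext l; simp; ring
        rw [conjTranspose_rectDiagonal_mul_self hnm, diagonal_add, hsum, diagonal_one,
          Matrix.mul_one]

theorem re_trace_conj_leadingDiagonal_le {m n : ℕ} (hnm : n ≤ m) {α : Fin n → ℝ}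
    (hα0 : ∀ k, 0 ≤ α k) (hmono : Antitone α) (i : Fin n) {Ψ : Matrix (Fin m) (Fin m) ℂ}
    (hΨ : Ψ ∈ unitaryGroup (Fin m) ℂ) :
    (trace ((rectDiagonal m fun l ↦ (α l : ℂ))ᴴ *
        (Ψᴴ * diagonal (fun k : Fin m ↦ if (k : ℕ) ≤ i then (1 : ℂ) else 0) * Ψ) *
        rectDiagonal m fun l ↦ (α l : ℂ))).re ≤ ∑ k ∈ Iic i, α k ^ 2 := by
  set q : Fin m → ℝ := fun k ↦ if (k : ℕ) ≤ i then 1 else 0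
  have hq0 (j : Fin m) : 0 ≤ q j := by simp only [q]; split_ifs <;> norm_num
  have hq1 (j : Fin m) : q j ≤ 1 := by simp only [q]; split_ifs <;> norm_num
  have hQ : (fun k : Fin m ↦ if (k : ℕ) ≤ i then (1 : ℂ) else 0) = fun k ↦ (q k : ℂ) := by
    ext k; simp only [q]; split_ifs <;> simp
  rw [hQ, re_trace_rectDiagonal_conj_diagonal hnm]
  set w : Fin n → ℝ := fun l ↦ ∑ j, q j * Complex.normSq (Ψ j (Fin.castLE hnm l))
  have hw0 (l : Fin n) : 0 ≤ w l :=
    sum_nonneg fun j _ ↦ mul_nonneg (hq0 j) (Complex.normSq_nonneg _)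
  have hw1 (l : Fin n) : w l ≤ 1 := calc
    w l ≤ ∑ j, Complex.normSq (Ψ j (Fin.castLE hnm l)) :=
      sum_le_sum fun j _ ↦ mul_le_of_le_one_left (Complex.normSq_nonneg _) (hq1 j)
    _ = 1 := sum_normSq_col_of_mem_unitaryGroup_s8 hΨ _
  have hrow (j : Fin m) : ∑ l : Fin n, Complex.normSq (Ψ j (Fin.castLE hnm l)) ≤ 1 := calc
    ∑ l : Fin n, Complex.normSq (Ψ j (Fin.castLE hnm l))
        = ∑ k ∈ univ.map (Fin.castLEEmb hnm), Complex.normSq (Ψ j k) := by simp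
    _ ≤ ∑ k, Complex.normSq (Ψ j k) := sum_le_univ_sum_of_nonneg fun _ ↦ Complex.normSq_nonneg _
    _ = 1 := sum_normSq_row_of_mem_unitaryGroup_s8 hΨ j
  have hwsum : ∑ l, w l ≤ #(Iic i) := calc
    ∑ l, w l = ∑ j, q j * ∑ l : Fin n, Complex.normSq (Ψ j (Fin.castLE hnm l)) := by
      simp only [w, mul_sum]; exact sum_comm
    _ ≤ ∑ j, q j := sum_le_sum fun j _ ↦ mul_le_of_le_one_right (hq0 j) (hrow j)
    _ = #(Iic i) := by
      simp only [q, sum_boole, Nat.lt_succ_iff.symm, Fin.card_filter_val_lt, Fin.card_Iic]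
      rw [min_eq_right (by omega)]
  exact sum_mul_le_sum_Iic_of_antitone i (fun k l hkl ↦ pow_le_pow_left₀ (hα0 l) (hmono hkl) 2)
    (sq_nonneg _) hw0 hw1 hwsum

theorem re_trace_leadingDiagonal_eq {m n : ℕ} (hnm : n ≤ m) (α : Fin n → ℝ) (i : Fin n) :
    (trace ((rectDiagonal m fun l ↦ (α l : ℂ))ᴴ *
        diagonal (fun k : Fin m ↦ if (k : ℕ) ≤ i then (1 : ℂ) else 0) *
        rectDiagonal m fun l ↦ (α l : ℂ))).re = ∑ k ∈ Iic i, α k ^ 2 := by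
  rw [trace_conjTranspose_rectDiagonal_mul_mul hnm, Complex.re_sum]
  simp [sq, apply_ite Complex.re, ← Complex.ofReal_mul, ← sum_filter, filter_ge_eq_Iic]

theorem stmt8_general
    {m p n : ℕ} (hnm : n ≤ m)
    (A : Matrix (Fin m) (Fin n) ℂ) (B : Matrix (Fin p) (Fin n) ℂ)
    (U : Matrix (Fin m) (Fin m) ℂ) (hU : U ∈ Matrix.unitaryGroup (Fin m) ℂ)
    (R : Matrix (Fin n) (Fin n) ℂ) (hR : IsUnit R.det)
    (α : Fin n → ℝ)
    (hα0 : ∀ k, 0 ≤ α k) (hmono : Antitone α)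
    (hA : A = U * (Matrix.of fun (k : Fin m) (l : Fin n) =>
        if (k : ℕ) = (l : ℕ) then Complex.ofReal (α l) else 0) * R)
    (hBB : Bᴴ * B = Rᴴ * Matrix.diagonal (fun l => Complex.ofReal (1 - α l ^ 2)) * R)
    (i : Fin n) :
(⨆ Φ : Matrix.unitaryGroup (Fin m) ℂ,
      (Matrix.trace (Aᴴ * (Φ : Matrix (Fin m) (Fin m) ℂ)ᴴ *
        Matrix.diagonal (fun k : Fin m => if (k : ℕ) ≤ (i : ℕ) then (1 : ℂ) else 0) *
        (Φ : Matrix (Fin m) (Fin m) ℂ) * A * (Aᴴ * A + Bᴴ * B)⁻¹)).re) =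
      ∑ k ∈ Finset.Iic i, α k ^ 2 := by
  set S := rectDiagonal m fun l ↦ (α l : ℂ)
  set Q : Matrix (Fin m) (Fin m) ℂ := diagonal fun k ↦ if (k : ℕ) ≤ (i : ℕ) then 1 else 0
  have hA' : A = U * S * R := hA
  have hval (Φ : Matrix (Fin m) (Fin m) ℂ) :
      trace (Aᴴ * Φᴴ * Q * Φ * A * (Aᴴ * A + Bᴴ * B)⁻¹) =
        trace (Sᴴ * ((Φ * U)ᴴ * Q * (Φ * U)) * S) :=
    calc trace (Aᴴ * Φᴴ * Q * Φ * A * (Aᴴ * A + Bᴴ * B)⁻¹)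
        = trace ((U * S * R)ᴴ * (Φᴴ * Q * Φ) * (U * S * R) * (Rᴴ * R)⁻¹) := by
          rw [conjTranspose_mul_self_add_eq_of_gsvd hnm hU hA' hBB, hA']
          simp only [Matrix.mul_assoc]
      _ = trace ((U * S)ᴴ * (Φᴴ * Q * Φ) * (U * S)) :=
          trace_conjTranspose_mul_mul_mul_inv_gram _ hR _
      _ = trace (Sᴴ * ((Φ * U)ᴴ * Q * (Φ * U)) * S) := by
          simp only [conjTranspose_mul, Matrix.mul_assoc]
  refine ciSup_eq_of_forall_le_of_forall_lt_exists_gt (fun Φ ↦ ?_) fun w hw ↦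
    ⟨⟨star U, Unitary.star_mem hU⟩, hw.trans_eq ?_⟩
  · rw [hval]
    exact re_trace_conj_leadingDiagonal_le hnm hα0 hmono i (mul_mem Φ.2 hU)
  · rw [hval, Unitary.star_mul_self_of_mem hU, conjTranspose_one, Matrix.one_mul, Matrix.mul_one,
      re_trace_leadingDiagonal_eq hnm]

theorem stmt8
    {m p n : ℕ} (hnm : n ≤ m)
    (A : Matrix (Fin m) (Fin n) ℂ) (B : Matrix (Fin p) (Fin n) ℂ)
    (hrank : (Matrix.fromRows A B).rank = n)
    (U : Matrix (Fin m) (Fin m) ℂ) (hU : U ∈ Matrix.unitaryGroup (Fin m) ℂ)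
    (R : Matrix (Fin n) (Fin n) ℂ) (hR : IsUnit R.det)
    (α : Fin n → ℝ)
    (hα0 : ∀ k, 0 ≤ α k) (hα1 : ∀ k, α k ≤ 1) (hmono : Antitone α)
    (hA : A = U * (Matrix.of fun (k : Fin m) (l : Fin n) =>
        if (k : ℕ) = (l : ℕ) then Complex.ofReal (α l) else 0) * R)
    (hBB : Bᴴ * B = Rᴴ * Matrix.diagonal (fun l => Complex.ofReal (1 - α l ^ 2)) * R)
    (i : Fin n) :
(⨆ Φ : Matrix.unitaryGroup (Fin m) ℂ,
      (Matrix.trace (Aᴴ * (Φ : Matrix (Fin m) (Fin m) ℂ)ᴴ *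
        Matrix.diagonal (fun k : Fin m => if (k : ℕ) ≤ (i : ℕ) then (1 : ℂ) else 0) *
        (Φ : Matrix (Fin m) (Fin m) ℂ) * A * (Aᴴ * A + Bᴴ * B)⁻¹)).re) =
      ∑ k ∈ Finset.Iic i, α k ^ 2 :=
  stmt8_general hnm A B U hU R hR α hα0 hmono hA hBB i
end
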